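/- arXiv:1409.6872 — 8 statements merged into one kernel-verified Lean document; each statement's English description precedes it below -/
import Mathlib

section
/- Let G be a group and H, K subgroups of G. If a subset A of G is both H-finite and K-finite, then A is (H ∩ K)-finite. -/
open scoped Pointwise

/-- A subset `A` of a group `G` is `H`-finite if `A ⊆ H * F` for some finite `F`. -/
def HFin {G : Type*} [Group G] (H : Subgroup G) (A : Set G) : Prop :=
  ∃ F : Finset G, A ⊆ (H : Set G) * (F : Set G)

/-- A set that is both `H`-finite and `K`-finite is `(H ∩ K)`-finite. -/
theorem stmt_1 {G : Type*} [Group G] (H K : Subgroup G) (A : Set G)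
    (hH : HFin H A) (hK : HFin K A) : HFin (H ⊓ K) A := by
  classical
  obtain ⟨F, hF⟩ := hH
  obtain ⟨E, hE⟩ := hK
  set g : G × G → G := fun p =>
    if h : (((H : Set G) * ({p.1} : Set G)) ∩ ((K : Set G) * ({p.2} : Set G))).Nonempty
    then h.choose else 1 with hg
  refine ⟨(F ×ˢ E).image g, fun a ha => ?_⟩
  obtain ⟨h, hh, f, hf, hhf⟩ := hF ha
  obtain ⟨k, hk, e, he, hke⟩ := hE ha
  simp only at hhf hke
  have hne : (((H : Set G) * ({f} : Set G)) ∩ ((K : Set G) * ({e} : Set G))).Nonempty :=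
    ⟨a, ⟨h, hh, f, rfl, hhf⟩, k, hk, e, rfl, hke⟩
  set x := g (f, e) with hx
  have hxmem : x ∈ ((H : Set G) * ({f} : Set G)) ∩ ((K : Set G) * ({e} : Set G)) := by
    rw [hx, hg]; simp only [dif_pos hne]; exact hne.choose_spec
  obtain ⟨⟨h', hh', f', hf', hx1⟩, ⟨k', hk', e', he', hx2⟩⟩ := hxmem
  simp only at hx1 hx2
  rw [Set.mem_singleton_iff] at hf' he'
  rw [hf'] at hx1
  rw [he'] at hx2
  refine ⟨a * x⁻¹, ⟨?_, ?_⟩, x, ?_, by group⟩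
  · have : a * x⁻¹ = h * h'⁻¹ := by rw [← hx1, ← hhf]; group
    rw [this]; exact H.mul_mem hh (H.inv_mem hh')
  · have : a * x⁻¹ = k * k'⁻¹ := by rw [← hx2, ← hke]; group
    rw [this]; exact K.mul_mem hk (K.inv_mem hk')
  · exact Finset.mem_coe.2 (Finset.mem_image.2 ⟨(f, e), Finset.mem_product.2 ⟨hf, he⟩, rfl⟩)
end

section
/- Let G act on a tree T with edge e and vertex v = ι(e), H = G_e, and A = G[e,v]. Then for every x ∈ G the symmetric difference A + Ax is H-finite; i.e. A is an H-almost invariant subset of G. -/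
open scoped Pointwise

/-- In a tree `T`, the directed edge `(a, b)` points at the vertex `w` if the geodesic
from `a` to `w` passes through `b`. -/
def PointsAt {V : Type*} (T : SimpleGraph V) (a b w : V) : Prop :=
  T.Adj a b ∧ T.dist a w = T.dist b w + 1


open SimpleGraph

section Aux
variable {V : Type*} {T : SimpleGraph V}

lemma aux_dist_ne (hT : T.IsTree) {u w : V} (r : V) (h : T.Adj u w) :
    T.dist r u ≠ T.dist r w := by
  classical
  intro hd
  obtain ⟨p, hp, hl⟩ := hT.isConnected.exists_path_of_dist r u
  by_cases hw : w ∈ p.support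
  · have h1 : T.dist r w ≤ (p.takeUntil w hw).length := dist_le _
    have h2 : T.dist w u ≤ (p.dropUntil w hw).length := dist_le _
    have h3 : (p.takeUntil w hw).length + (p.dropUntil w hw).length = p.length := by
      rw [← Walk.length_append, Walk.take_spec]
    have h4 : T.dist w u ≠ 0 := fun h0 => h.symm.ne (hT.isConnected.dist_eq_zero_iff.mp h0)
    omega
  · have h1 : (Walk.cons h.symm p.reverse).IsPath := by
      rw [Walk.cons_isPath_iff]
      exact ⟨hp.reverse, by simpa [Walk.support_reverse] using hw⟩
    obtain ⟨q, hq, hlq⟩ := hT.isConnected.exists_path_of_dist w r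
    have heq := hT.IsAcyclic.path_unique ⟨Walk.cons h.symm p.reverse, h1⟩ ⟨q, hq⟩
    have hle : (Walk.cons h.symm p.reverse).length = q.length := by
      rw [Subtype.mk.injEq] at heq; rw [heq]
    rw [Walk.length_cons, Walk.length_reverse] at hle
    rw [SimpleGraph.dist_comm] at hlq
    omega

lemma aux_cross (hT : T.IsTree) {a b u w : V} (hab : T.Adj a b) (huw : T.Adj u w)
    (hu : T.dist b u = T.dist a u + 1) (hw : T.dist a w = T.dist b w + 1) :
    u = a ∧ w = b := by
  classical
  have hc := hT.isConnected
  have hd1 : T.dist u w ≤ 1 := by simpa using dist_le huw.toWalk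
  have ht1 : T.dist a w ≤ T.dist a u + T.dist u w := hc.dist_triangle
  have ht2 : T.dist b u ≤ T.dist b w + T.dist w u := hc.dist_triangle
  rw [SimpleGraph.dist_comm (u := w) (v := u)] at ht2
  have hbw : T.dist b w = T.dist a u := by omega
  have haw : T.dist a w = T.dist a u + 1 := by omega
  obtain ⟨p, hp, hlp⟩ := hc.exists_path_of_dist a u
  obtain ⟨q, hq, hlq⟩ := hc.exists_path_of_dist b w
  have hwp : w ∉ p.support := by
    intro hmem
    have := dist_le (p.takeUntil w hmem)
    have := p.length_takeUntil_le hmem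
    omega
  have haq : a ∉ q.support := by
    intro hmem
    have h1 : T.dist b a ≤ (q.takeUntil a hmem).length := dist_le _
    have h2 : T.dist a w ≤ (q.dropUntil a hmem).length := dist_le _
    have h3 : (q.takeUntil a hmem).length + (q.dropUntil a hmem).length = q.length := by
      rw [← Walk.length_append, Walk.take_spec]
    have h4 : T.dist b a ≠ 0 := fun h0 => hab.ne' (hc.dist_eq_zero_iff.mp h0)
    omega
  have hP1 : (Walk.cons huw.symm p.reverse).IsPath := by
    rw [Walk.cons_isPath_iff]
    exact ⟨hp.reverse, by simpa [Walk.support_reverse] using hwp⟩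
  have hP2 : ((Walk.cons hab q).reverse).IsPath := by
    apply Walk.IsPath.reverse
    rw [Walk.cons_isPath_iff]
    exact ⟨hq, haq⟩
  have heq := hT.IsAcyclic.path_unique ⟨Walk.cons huw.symm p.reverse, hP1⟩
    ⟨(Walk.cons hab q).reverse, hP2⟩
  rw [Subtype.mk.injEq] at heq
  have humem : u ∈ ((Walk.cons hab q).reverse).support := by
    rw [← heq]
    simp only [Walk.support_cons, List.mem_cons]
    right
    rw [Walk.support_reverse, List.mem_reverse]
    exact p.end_mem_support
  rw [Walk.support_reverse, List.mem_reverse, Walk.support_cons, List.mem_cons] at humem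
  rcases humem with h1 | h1
  · have : T.dist a u = 0 := hc.dist_eq_zero_iff.mpr h1.symm
    have hbw0 : T.dist b w = 0 := by omega
    exact ⟨h1, (hc.dist_eq_zero_iff.mp hbw0).symm⟩
  · exfalso
    have := dist_le (q.takeUntil u h1)
    have := q.length_takeUntil_le h1
    omega

lemma aux_side (hT : T.IsTree) {a b : V} (hab : T.Adj a b) (w : V) :
    T.dist a w = T.dist b w + 1 ∨ T.dist b w = T.dist a w + 1 := by
  have hc := hT.isConnected
  have hd1 : T.dist a b ≤ 1 := by simpa using dist_le hab.toWalk
  have ht1 : T.dist a w ≤ T.dist a b + T.dist b w := hc.dist_triangle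
  have ht2 : T.dist b w ≤ T.dist b a + T.dist a w := hc.dist_triangle
  rw [SimpleGraph.dist_comm (u := b) (v := a)] at ht2
  have hne := aux_dist_ne hT w hab
  rw [SimpleGraph.dist_comm (u := w) (v := a), SimpleGraph.dist_comm (u := w) (v := b)] at hne
  omega

lemma aux_crossing {Q : V → Prop} : ∀ {c d : V} (W : T.Walk c d), Q c → ¬ Q d →
    ∃ y z, T.Adj y z ∧ y ∈ W.support ∧ z ∈ W.support ∧ Q y ∧ ¬ Q z := by
  intro c d W
  induction W with
  | nil => intro h1 h2; exact absurd h1 h2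
  | @cons c m d h W ih =>
    intro h1 h2
    by_cases hq : Q m
    · obtain ⟨y, z, h3, h4, h5, h6, h7⟩ := ih hq h2
      exact ⟨y, z, h3, by simp [h4], by simp [h5], h6, h7⟩
    · exact ⟨c, m, h, by simp, by simp, h1, hq⟩

end Aux

lemma aux_dist_smul {G V : Type*} [Group G] [MulAction G V] {T : SimpleGraph V}
    (hact : ∀ (g : G) (u v : V), T.Adj u v → T.Adj (g • u) (g • v))
    (hc : T.Connected) (g : G) (u v : V) : T.dist (g • u) (g • v) = T.dist u v := by
  have key : ∀ (g : G) (u v : V), T.dist (g • u) (g • v) ≤ T.dist u v := by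
    intro g u v
    obtain ⟨p, _, hl⟩ := hc.exists_path_of_dist u v
    have := SimpleGraph.dist_le (p.map ⟨fun w => g • w, fun h => hact g _ _ h⟩)
    rwa [SimpleGraph.Walk.length_map, hl] at this
  refine le_antisymm (key g u v) ?_
  have := key g⁻¹ (g • u) (g • v)
  simpa using this

/-- For `e = (a,b)` with initial vertex `v = a`, `H = G_e`, and `A = G[e, ι e]`,
the symmetric difference `A + Ax` is `H`-finite for every `x ∈ G`; i.e. `A` is
an `H`-almost invariant subset of `G`. -/
theorem stmt_4 {G V : Type*} [Group G] [MulAction G V] (T : SimpleGraph V)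
    (hT : T.IsTree) (hact : ∀ (g : G) (u v : V), T.Adj u v → T.Adj (g • u) (g • v))
    (a b : V) (he : T.Adj a b)
    (H : Subgroup G) (hH : H = MulAction.stabilizer G a ⊓ MulAction.stabilizer G b)
    (A : Set G) (hA : A = {g : G | PointsAt T a b (g • a)}) :
    ∀ x : G, HFin H (symmDiff A ((fun g => g * x) '' A)) := by
  intro x
  classical
  have hc := hT.isConnected
  obtain ⟨p0, hp0, -⟩ := hc.exists_path_of_dist a (x⁻¹ • a)
  set S : V → Prop := fun w => T.dist a w = T.dist b w + 1 with hS
  have hmemA : ∀ g : G, g ∈ A ↔ S (g • a) := by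
    intro g
    rw [hA]
    simp only [Set.mem_setOf_eq, PointsAt, hS]
    exact ⟨fun h => h.2, fun h => ⟨he, h⟩⟩
  have hmemAx : ∀ h : G, h ∈ (fun g => g * x) '' A ↔ S (h • (x⁻¹ • a)) := by
    intro h
    constructor
    · rintro ⟨g, hg, rfl⟩
      have := (hmemA g).mp hg
      simpa [mul_smul, smul_smul] using this
    · intro hs
      refine ⟨h * x⁻¹, (hmemA _).mpr ?_, by group⟩
      simpa [mul_smul] using hs
  -- key: crossing
  have key : ∀ h ∈ symmDiff A ((fun g => g * x) '' A),
      ∃ y ∈ p0.support, ∃ z ∈ p0.support, h • y = a ∧ h • z = b := by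
    intro h hmem
    rw [Set.mem_symmDiff] at hmem
    have hdists := aux_side hT he
    -- the image walk
    let W : T.Walk (h • a) (h • (x⁻¹ • a)) :=
      p0.map ⟨fun w => h • w, fun hadj => hact h _ _ hadj⟩
    have hWsupp : ∀ y', y' ∈ W.support → ∃ y ∈ p0.support, h • y = y' := by
      intro y' hy'
      rw [Walk.support_map, List.mem_map] at hy'
      obtain ⟨y, hy1, hy2⟩ := hy'
      exact ⟨y, hy1, hy2⟩
    rcases hmem with ⟨hin, hout⟩ | ⟨hin, hout⟩
    · -- S (h•a), ¬ S (h•x⁻¹•a)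
      have h1 : S (h • a) := (hmemA h).mp hin
      have h2 : ¬ S (h • (x⁻¹ • a)) := fun hs => hout ((hmemAx h).mpr hs)
      obtain ⟨y', z', hadj, hy', hz', hQy, hQz⟩ := aux_crossing (Q := S) W h1 h2
      -- y' is b-side, z' is a-side
      have hz'side : T.dist b z' = T.dist a z' + 1 := (hdists z').resolve_left hQz
      obtain ⟨hz'a, hy'b⟩ := aux_cross hT he hadj.symm hz'side hQy
      obtain ⟨z, hz, hzz⟩ := hWsupp z' hz'
      obtain ⟨y, hy, hyy⟩ := hWsupp y' hy'
      exact ⟨z, hz, y, hy, by rw [hzz, hz'a], by rw [hyy, hy'b]⟩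
    · -- S (h•x⁻¹•a), ¬ S (h•a)
      have h1 : S (h • (x⁻¹ • a)) := (hmemAx h).mp hin
      have h2 : ¬ S (h • a) := fun hs => hout ((hmemA h).mpr hs)
      obtain ⟨y', z', hadj, hy', hz', hQy, hQz⟩ :=
        aux_crossing (Q := fun v => ¬ S v) W h2 (not_not.mpr h1)
      have hz'S : S z' := not_not.mp hQz
      have hy'side : T.dist b y' = T.dist a y' + 1 := (hdists y').resolve_left hQy
      obtain ⟨hy'a, hz'b⟩ := aux_cross hT he hadj hy'side hz'S
      obtain ⟨y, hy, hyy⟩ := hWsupp y' hy'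
      obtain ⟨z, hz, hzz⟩ := hWsupp z' hz'
      exact ⟨y, hy, z, hz, by rw [hyy, hy'a], by rw [hzz, hz'b]⟩
  -- build the finite set
  let pick : V → V → G := fun y z =>
    if hyz : ∃ g : G, g • y = a ∧ g • z = b then hyz.choose else 1
  refine ⟨(p0.support.toFinset ×ˢ p0.support.toFinset).image fun pr => pick pr.1 pr.2, ?_⟩
  intro h hmem
  obtain ⟨y, hy, z, hz, hya, hzb⟩ := key h hmem
  have hex : ∃ g : G, g • y = a ∧ g • z = b := ⟨h, hya, hzb⟩
  have hg0spec : (pick y z) • y = a ∧ (pick y z) • z = b := by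
    simp only [pick, dif_pos hex]
    exact hex.choose_spec
  have hH1 : h * (pick y z)⁻¹ ∈ (H : Set G) := by
    rw [hH]
    have hinva : (pick y z)⁻¹ • a = y := by rw [← hg0spec.1, inv_smul_smul]
    have hinvb : (pick y z)⁻¹ • b = z := by rw [← hg0spec.2, inv_smul_smul]
    refine Subgroup.mem_inf.mpr ⟨?_, ?_⟩
    · rw [MulAction.mem_stabilizer_iff, mul_smul, hinva, hya]
    · rw [MulAction.mem_stabilizer_iff, mul_smul, hinvb, hzb]
  have hg0F : pick y z ∈ ((p0.support.toFinset ×ˢ p0.support.toFinset).image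
      fun pr => pick pr.1 pr.2 : Finset G) :=
    Finset.mem_image.mpr ⟨(y, z),
      Finset.mem_product.mpr ⟨List.mem_toFinset.mpr hy, List.mem_toFinset.mpr hz⟩, rfl⟩
  have := Set.mul_mem_mul hH1 (by exact_mod_cast hg0F :
    pick y z ∈ (((p0.support.toFinset ×ˢ p0.support.toFinset).image
      fun pr => pick pr.1 pr.2 : Finset G) : Set G))
  simpa using this
end

section
/- Let G act on a connected graph X with VX = G·o and G_o = H, with finitely many G-orbits of edges. If A ⊆ G satisfies AH = A and A is H-almost invariant, then the corresponding vertex set {gH : g ∈ A} ⊆ VX has H-finite coboundary δA (i.e. δA meets only finitely many H-orbits of edges). -/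
open scoped Pointwise

/-- In the coset graph `X` (vertices `gH`, edges `{gH, gsH}`, `s ∈ S`, for a finite set
`S` generating `G` over `H`), if `A ⊆ G` satisfies `AH = A` and is `H`-almost
invariant, then the coboundary `δĀ` of the corresponding vertex set
`Ā = {gH : g ∈ A}` meets only finitely many `H`-orbits of edges. -/
theorem stmt_8 {G : Type*} [Group G] (H : Subgroup G) (S : Finset G)
    (hgen : Subgroup.closure ((H : Set G) ∪ (S : Set G)) = ⊤)
    (A : Set G) (hAH : ∀ a ∈ A, ∀ h ∈ H, a * h ∈ A)
    (hai : ∀ x : G, HFin H (symmDiff A ((fun a => a * x) '' A)))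
    (Abar : Set (G ⧸ H)) (hAbar : Abar = {q : G ⧸ H | ∃ a ∈ A, (a : G ⧸ H) = q})
    (δ : Set ((G ⧸ H) × (G ⧸ H)))
    (hδ : δ = {p : (G ⧸ H) × (G ⧸ H) |
      (∃ g : G, ∃ s ∈ S, p.1 = (g : G ⧸ H) ∧ p.2 = ((g * s : G) : G ⧸ H)) ∧
      (p.1 ∈ Abar ↔ p.2 ∉ Abar)}) :
    ∃ F : Finset ((G ⧸ H) × (G ⧸ H)),
      δ ⊆ {q | ∃ h ∈ H, ∃ p ∈ F, q.1 = h • p.1 ∧ q.2 = h • p.2} := by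
  classical
  choose Fs hFs using hai
  refine ⟨S.biUnion (fun s => (Fs s⁻¹).image
      (fun f => (((f : G) : G ⧸ H), ((f * s : G) : G ⧸ H)))), ?_⟩
  intro p hp
  rw [hδ] at hp
  obtain ⟨⟨g, s, hs, h1, h2⟩, hxor⟩ := hp
  have memA : ∀ g : G, ((g : G ⧸ H) ∈ Abar ↔ g ∈ A) := by
    intro g
    rw [hAbar]
    constructor
    · rintro ⟨a, ha, hq⟩
      rw [QuotientGroup.eq] at hq
      have := hAH a ha _ hq
      simpa using this
    · exact fun h => ⟨g, h, rfl⟩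
  have h1A : (p.1 ∈ Abar) ↔ g ∈ A := by rw [h1, memA]
  have h2A : (p.2 ∈ Abar) ↔ g * s ∈ A := by rw [h2, memA]
  have hg : g ∈ symmDiff A ((fun a => a * s⁻¹) '' A) := by
    rw [Set.mem_symmDiff]
    have himg : g ∈ (fun a => a * s⁻¹) '' A ↔ g * s ∈ A := by
      constructor
      · rintro ⟨a, ha, rfl⟩
        simpa using ha
      · intro h
        exact ⟨g * s, h, by simp⟩
    rw [h1A, h2A] at hxor
    rw [himg]
    tauto
  obtain ⟨h, hh, f, hf, hfg⟩ := hFs s⁻¹ hg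
  refine ⟨h, hh, ((f : G ⧸ H), ((f * s : G) : G ⧸ H)), ?_, ?_, ?_⟩
  · exact Finset.mem_biUnion.2 ⟨s, hs, Finset.mem_image.2 ⟨f, hf, rfl⟩⟩
  · rw [h1, ← hfg]
    rfl
  · rw [h2, ← hfg]
    show ((h * f * s : G) : G ⧸ H) = _
    rw [mul_assoc]
    rfl
end

section
/- Kropholler's corner lemma: Let G be a group, H a subgroup, K = gHg⁻¹ for some g ∈ G. Let A, B be H-almost invariant subsets of G with AH = A, BH = B. Suppose 1 ∈ gB* (i.e. g⁻¹ ∉ B) and g ∈ A*. Then A ∩ gB is (H ∩ K)-almost invariant; in particular for every x ∈ G the symmetric difference (A ∩ gB)x + (A ∩ gB) is (H ∩ K)-finite. -/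
open scoped Pointwise

/-- `A` is `H`-almost invariant: `A + Ax` is `H`-finite for every `x ∈ G`. -/
def HAlmostInv {G : Type*} [Group G] (H : Subgroup G) (A : Set G) : Prop :=
  ∀ x : G, HFin H (symmDiff A ((fun a => a * x) '' A))

section Aux

variable {G : Type*} [Group G]

lemma hfin_of_forall {H : Subgroup G} {S : Set G} (F : Finset G)
    (h : ∀ s ∈ S, ∃ f ∈ F, s * f⁻¹ ∈ H) : HFin H S := by
  refine ⟨F, fun s hs => ?_⟩
  obtain ⟨f, hf, hH⟩ := h s hs
  exact ⟨s * f⁻¹, hH, f, hf, by group⟩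

lemma hfin_inf {H K : Subgroup G} {S : Set G} (P Q : Finset G)
    (hP : ∀ d ∈ S, ∃ p ∈ P, d * p⁻¹ ∈ H) (hQ : ∀ d ∈ S, ∃ q ∈ Q, d * q⁻¹ ∈ K) :
    HFin (H ⊓ K) S := by
  classical
  set z : G → G → G := fun p q =>
    if h : ∃ w, w * p⁻¹ ∈ H ∧ w * q⁻¹ ∈ K then h.choose else 1 with hz
  refine hfin_of_forall ((P ×ˢ Q).image fun pq => z pq.1 pq.2) ?_
  intro d hd
  obtain ⟨p, hp, hdp⟩ := hP d hd
  obtain ⟨q, hq, hdq⟩ := hQ d hd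
  have hex : ∃ w, w * p⁻¹ ∈ H ∧ w * q⁻¹ ∈ K := ⟨d, hdp, hdq⟩
  refine ⟨z p q, Finset.mem_image.mpr ⟨(p, q), Finset.mem_product.mpr ⟨hp, hq⟩, rfl⟩, ?_⟩
  have hzpq : z p q * p⁻¹ ∈ H ∧ z p q * q⁻¹ ∈ K := by
    rw [hz]; simp only [dif_pos hex]; exact hex.choose_spec
  refine Subgroup.mem_inf.mpr ⟨?_, ?_⟩
  · have heq : d * (z p q)⁻¹ = (d * p⁻¹) * (z p q * p⁻¹)⁻¹ := by group
    rw [heq]; exact mul_mem hdp (inv_mem hzpq.1)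
  · have heq : d * (z p q)⁻¹ = (d * q⁻¹) * (z p q * q⁻¹)⁻¹ := by group
    rw [heq]; exact mul_mem hdq (inv_mem hzpq.2)

end Aux

/-- Kropholler's corner lemma: if `A`, `B` are `H`-almost invariant with `AH = A`,
`BH = B`, `K = gHg⁻¹`, `g⁻¹ ∉ B` and `g ∉ A`, then the corner `A ∩ gB` is
`(H ∩ K)`-almost invariant: `(A ∩ gB)x + (A ∩ gB)` is `(H ∩ K)`-finite for all `x`. -/
theorem stmt_10 {G : Type*} [Group G] (H : Subgroup G) (g : G)
    (K : Subgroup G) (hK : ∀ x : G, x ∈ K ↔ ∃ h ∈ H, x = g * h * g⁻¹)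
    (A B : Set G)
    (hAH : ∀ a ∈ A, ∀ h ∈ H, a * h ∈ A) (hBH : ∀ b ∈ B, ∀ h ∈ H, b * h ∈ B)
    (haiA : HAlmostInv H A) (haiB : HAlmostInv H B)
    (hgB : g⁻¹ ∉ B) (hgA : g ∉ A) :
    HAlmostInv (H ⊓ K) (A ∩ (fun b => g * b) '' B) := by
  classical
  choose EA hEA using haiA
  choose EB hEB using haiB
  -- elementwise versions of the almost-invariance data
  have hA' : ∀ y d, d ∈ A ∧ d * y⁻¹ ∉ A ∨ d * y⁻¹ ∈ A ∧ d ∉ A →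
      ∃ e ∈ EA y, d * e⁻¹ ∈ H := by
    intro y d hd
    have hmem : d ∈ symmDiff A ((fun a => a * y) '' A) := by
      rw [Set.mem_symmDiff]
      rcases hd with ⟨h1, h2⟩ | ⟨h1, h2⟩
      · refine Or.inl ⟨h1, fun hc => h2 ?_⟩
        obtain ⟨a, ha, rfl⟩ := hc
        simpa using ha
      · exact Or.inr ⟨⟨d * y⁻¹, h1, by show d * y⁻¹ * y = d; group⟩, h2⟩
    obtain ⟨h, hh, e, he, heq⟩ := hEA y hmem
    refine ⟨e, he, ?_⟩
    have : d * e⁻¹ = h := by rw [← heq]; group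
    rw [this]; exact hh
  have hB' : ∀ y d, d ∈ B ∧ d * y⁻¹ ∉ B ∨ d * y⁻¹ ∈ B ∧ d ∉ B →
      ∃ e ∈ EB y, d * e⁻¹ ∈ H := by
    intro y d hd
    have hmem : d ∈ symmDiff B ((fun a => a * y) '' B) := by
      rw [Set.mem_symmDiff]
      rcases hd with ⟨h1, h2⟩ | ⟨h1, h2⟩
      · refine Or.inl ⟨h1, fun hc => h2 ?_⟩
        obtain ⟨a, ha, rfl⟩ := hc
        simpa using ha
      · exact Or.inr ⟨⟨d * y⁻¹, h1, by show d * y⁻¹ * y = d; group⟩, h2⟩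
    obtain ⟨h, hh, e, he, heq⟩ := hEB y hmem
    refine ⟨e, he, ?_⟩
    have : d * e⁻¹ = h := by rw [← heq]; group
    rw [this]; exact hh
  -- corner conditions
  have hgHA : ∀ h : G, h ∈ H → g * h ∉ A := by
    intro h hh hc
    exact hgA (by simpa using hAH _ hc h⁻¹ (inv_mem hh))
  have hgHB : ∀ h : G, h ∈ H → g⁻¹ * h ∉ B := by
    intro h hh hc
    exact hgB (by simpa using hBH _ hc h⁻¹ (inv_mem hh))
  intro x
  -- decode membership in the corner set and its translate
  have memC : ∀ d : G, d ∈ A ∩ (fun b => g * b) '' B ↔ d ∈ A ∧ g⁻¹ * d ∈ B := by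
    intro d
    constructor
    · rintro ⟨hd, b, hb, rfl⟩
      exact ⟨hd, by simpa using hb⟩
    · rintro ⟨hd, hb⟩
      exact ⟨hd, g⁻¹ * d, hb, by show g * (g⁻¹ * d) = d; group⟩
  have memD : ∀ d : G, d ∈ symmDiff (A ∩ (fun b => g * b) '' B)
      ((fun a => a * x) '' (A ∩ (fun b => g * b) '' B)) ↔
      (d ∈ A ∧ g⁻¹ * d ∈ B) ∧ ¬(d * x⁻¹ ∈ A ∧ g⁻¹ * d * x⁻¹ ∈ B) ∨
      (d * x⁻¹ ∈ A ∧ g⁻¹ * d * x⁻¹ ∈ B) ∧ ¬(d ∈ A ∧ g⁻¹ * d ∈ B) := by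
    intro d
    rw [Set.mem_symmDiff]
    have himg : d ∈ (fun a => a * x) '' (A ∩ (fun b => g * b) '' B) ↔
        d * x⁻¹ ∈ A ∧ g⁻¹ * d * x⁻¹ ∈ B := by
      constructor
      · rintro ⟨a, ha, rfl⟩
        rw [memC] at ha
        constructor
        · simpa using ha.1
        · have := ha.2
          have he : g⁻¹ * (a * x) * x⁻¹ = g⁻¹ * a := by group
          rw [he]; exact this
      · rintro ⟨h1, h2⟩
        have h2' : g⁻¹ * (d * x⁻¹) ∈ B := by
          have he : g⁻¹ * (d * x⁻¹) = g⁻¹ * d * x⁻¹ := by group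
          rw [he]; exact h2
        exact ⟨d * x⁻¹, (memC _).mpr ⟨h1, h2'⟩, by show d * x⁻¹ * x = d; group⟩
    rw [himg, memC]
  -- the finite sets for H-finiteness and K-finiteness
  set P : Finset G := EA x ∪ (EB x).biUnion
      (fun f => ((EA f⁻¹ ∪ EA (x * f⁻¹)).image (fun e => e * f))) with hP
  set Q : Finset G := (EB x).image (fun f => g * f) ∪ (EA x).biUnion
      (fun e => ((EB e⁻¹ ∪ EB (x * e⁻¹)).image (fun f => g * f * e))) with hQ
  apply hfin_inf P Q
  · -- H-finiteness
    intro d hd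
    rw [memD] at hd
    -- basic facts
    have hdA : d ∈ A ∨ d * x⁻¹ ∈ A := by tauto
    have hsplit : (d ∈ A ∧ d * x⁻¹ ∉ A ∨ d * x⁻¹ ∈ A ∧ d ∉ A) ∨
        ((g⁻¹ * d) ∈ B ∧ (g⁻¹ * d) * x⁻¹ ∉ B ∨ (g⁻¹ * d) * x⁻¹ ∈ B ∧ (g⁻¹ * d) ∉ B) := by
      have he : (g⁻¹ * d) * x⁻¹ = g⁻¹ * d * x⁻¹ := by group
      rw [he]; tauto
    rcases hsplit with hs | hs
    · obtain ⟨e, he, heH⟩ := hA' x d hs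
      exact ⟨e, Finset.mem_union_left _ he, heH⟩
    · obtain ⟨f, hf, hfH⟩ := hB' x (g⁻¹ * d) hs
      -- so d * f⁻¹ ∈ gH, hence d * f⁻¹ ∉ A
      have hu : d * f⁻¹ ∉ A := by
        have : d * f⁻¹ = g * (g⁻¹ * d * f⁻¹) := by group
        rw [this]; exact hgHA _ hfH
      rcases hdA with hdA | hdA
      · -- d*f⁻¹ ∈ A·f⁻¹ \ A
        obtain ⟨e, he, heH⟩ := hA' f⁻¹ (d * f⁻¹)
          (Or.inr ⟨by simpa using hdA, hu⟩)
        refine ⟨e * f, ?_, ?_⟩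
        · refine Finset.mem_union_right _ (Finset.mem_biUnion.mpr ⟨f, hf, ?_⟩)
          exact Finset.mem_image.mpr ⟨e, Finset.mem_union_left _ he, rfl⟩
        · have : d * (e * f)⁻¹ = (d * f⁻¹) * e⁻¹ := by group
          rw [this]; exact heH
      · have hmem : d * f⁻¹ * (x * f⁻¹)⁻¹ ∈ A := by
          have he2 : d * f⁻¹ * (x * f⁻¹)⁻¹ = d * x⁻¹ := by group
          rw [he2]; exact hdA
        obtain ⟨e, he, heH⟩ := hA' (x * f⁻¹) (d * f⁻¹) (Or.inr ⟨hmem, hu⟩)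
        refine ⟨e * f, ?_, ?_⟩
        · refine Finset.mem_union_right _ (Finset.mem_biUnion.mpr ⟨f, hf, ?_⟩)
          exact Finset.mem_image.mpr ⟨e, Finset.mem_union_right _ he, rfl⟩
        · have : d * (e * f)⁻¹ = (d * f⁻¹) * e⁻¹ := by group
          rw [this]; exact heH
  · -- K-finiteness
    intro d hd
    rw [memD] at hd
    have hdB : g⁻¹ * d ∈ B ∨ g⁻¹ * d * x⁻¹ ∈ B := by tauto
    have hsplit : ((g⁻¹ * d) ∈ B ∧ (g⁻¹ * d) * x⁻¹ ∉ B ∨ (g⁻¹ * d) * x⁻¹ ∈ B ∧ (g⁻¹ * d) ∉ B) ∨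
        (d ∈ A ∧ d * x⁻¹ ∉ A ∨ d * x⁻¹ ∈ A ∧ d ∉ A) := by
      have he : (g⁻¹ * d) * x⁻¹ = g⁻¹ * d * x⁻¹ := by group
      rw [he]; tauto
    rcases hsplit with hs | hs
    · obtain ⟨f, hf, hfH⟩ := hB' x (g⁻¹ * d) hs
      refine ⟨g * f, Finset.mem_union_left _ (Finset.mem_image.mpr ⟨f, hf, rfl⟩), ?_⟩
      rw [hK]
      exact ⟨g⁻¹ * d * f⁻¹, hfH, by group⟩
    · obtain ⟨e, he, heH⟩ := hA' x d hs
      -- g⁻¹ * d * e⁻¹ ∉ B since d * e⁻¹ ∈ H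
      have hv : g⁻¹ * (d * e⁻¹) ∉ B := hgHB _ heH
      rcases hdB with hdB | hdB
      · have hmem1 : g⁻¹ * d * e⁻¹ * (e⁻¹)⁻¹ ∈ B := by
          have he2 : g⁻¹ * d * e⁻¹ * (e⁻¹)⁻¹ = g⁻¹ * d := by group
          rw [he2]; exact hdB
        have hmem2 : g⁻¹ * d * e⁻¹ ∉ B := by
          have he2 : g⁻¹ * d * e⁻¹ = g⁻¹ * (d * e⁻¹) := by group
          rw [he2]; exact hv
        obtain ⟨f, hf, hfH⟩ := hB' e⁻¹ (g⁻¹ * d * e⁻¹) (Or.inr ⟨hmem1, hmem2⟩)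
        refine ⟨g * f * e, ?_, ?_⟩
        · refine Finset.mem_union_right _ (Finset.mem_biUnion.mpr ⟨e, he, ?_⟩)
          exact Finset.mem_image.mpr ⟨f, Finset.mem_union_left _ hf, rfl⟩
        · rw [hK]
          exact ⟨g⁻¹ * d * e⁻¹ * f⁻¹, hfH, by group⟩
      · have hmem1 : g⁻¹ * d * e⁻¹ * (x * e⁻¹)⁻¹ ∈ B := by
          have he2 : g⁻¹ * d * e⁻¹ * (x * e⁻¹)⁻¹ = g⁻¹ * d * x⁻¹ := by group
          rw [he2]; exact hdB
        have hmem2 : g⁻¹ * d * e⁻¹ ∉ B := by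
          have he2 : g⁻¹ * d * e⁻¹ = g⁻¹ * (d * e⁻¹) := by group
          rw [he2]; exact hv
        obtain ⟨f, hf, hfH⟩ := hB' (x * e⁻¹) (g⁻¹ * d * e⁻¹) (Or.inr ⟨hmem1, hmem2⟩)
        refine ⟨g * f * e, ?_, ?_⟩
        · refine Finset.mem_union_right _ (Finset.mem_biUnion.mpr ⟨e, he, ?_⟩)
          exact Finset.mem_image.mpr ⟨f, Finset.mem_union_right _ hf, rfl⟩
        · rw [hK]
          exact ⟨g⁻¹ * d * e⁻¹ * f⁻¹, hfH, by group⟩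
end

section
/- Let Γ be the graph with vertex set M (as above) and an edge between B, C whenever d(B,C) = 1. If B, C ∈ M with d(B,C) = n, then there are exactly n! geodesic paths in Γ from B to C. -/
open scoped Pointwise

/-- The number of right cosets `Hg` meeting a set `A ⊆ G`. -/
noncomputable def cosetCount {G : Type*} [Group G] (H : Subgroup G) (A : Set G) : ℕ :=
  Nat.card (Quotient.mk (QuotientGroup.rightRel H) '' A : Set _)

/-! An `H`-invariant subset of `G` is the preimage of a subset of the coset space `H\G`, and
`d` counts the cosets in a symmetric difference. So `Γ` is the graph of subsets of `H\G`, two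
of them adjacent when they differ in one point, and translating by `B ∆ ·` turns a geodesic
from `B` to `C` into a path from `∅` to the `n`-element set `T = (B ∆ C)/H` that adds one point
of `T` at each step: it is the same as an ordering of `T`. -/

open scoped symmDiff

lemma symmDiff_symmDiff_symmDiff_cancel_left {β : Type*} [GeneralizedBooleanAlgebra β]
    (a b c : β) : (a ∆ b) ∆ (a ∆ c) = b ∆ c := by
  rw [symmDiff_symmDiff_symmDiff_comm, symmDiff_self, bot_symmDiff]

namespace Set

variable {α : Type*} {n : ℕ}

def togglePaths (s t : Set α) (n : ℕ) : Set (Fin (n + 1) → Set α) :=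
  {p | p 0 = s ∧ p (Fin.last n) = t ∧ ∀ i : Fin n, (p i.castSucc ∆ p i.succ).ncard = 1}

def initialImages (q : Fin n → α) (i : Fin (n + 1)) : Set α :=
  q '' {j | j.castSucc < i}

section InitialImages

variable (q : Fin n → α)

@[simp]
lemma initialImages_zero : initialImages q 0 = ∅ := by
  simp [initialImages]

@[simp]
lemma initialImages_last : initialImages q (Fin.last n) = range q := by
  simp [initialImages, Fin.castSucc_lt_last]

lemma initialImages_castSucc (i : Fin n) : initialImages q i.castSucc = q '' Iio i := by
  simp [initialImages, Iio]

lemma initialImages_succ (i : Fin n) : initialImages q i.succ = q '' Iic i := by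
  simp [initialImages, Iic]

lemma symmDiff_initialImages {q : Fin n → α} (hq : q.Injective) (i : Fin n) :
    initialImages q i.castSucc ∆ initialImages q i.succ = {q i} := by
  have hi : q i ∉ q '' Iio i := by simp [hq.mem_set_image]
  rw [initialImages_castSucc, initialImages_succ, ← Iio_insert, image_insert_eq]
  ext x
  by_cases hx : x = q i
  · subst hx; simp [mem_symmDiff, hi]
  · simp [mem_symmDiff, hx]

lemma initialImages_mem_togglePaths {q : Fin n → α} (hq : q.Injective) :
    initialImages q ∈ togglePaths ∅ (range q) n :=
  ⟨initialImages_zero q, initialImages_last q, fun i => by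
    rw [symmDiff_initialImages hq, ncard_singleton]⟩

end InitialImages

lemma subset_range_of_symmDiff_eq_singleton {p : Fin (n + 1) → Set α} {q : Fin n → α}
    (h0 : p 0 = ∅) (hq : ∀ i, p i.castSucc ∆ p i.succ = {q i}) (i : Fin (n + 1)) :
    p i ⊆ range q := by
  induction i using Fin.induction with
  | zero => simp [h0]
  | succ i ih =>
    rw [← symmDiff_symmDiff_cancel_left (p i.castSucc) (p i.succ), hq i]
    exact symmDiff_le_sup.trans (union_subset ih (singleton_subset_iff.2 (mem_range_self i)))

lemma eq_initialImages_of_symmDiff_eq_singleton {p : Fin (n + 1) → Set α} {q : Fin n → α}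
    (hinj : q.Injective) (h0 : p 0 = ∅) (hq : ∀ i, p i.castSucc ∆ p i.succ = {q i}) :
    p = initialImages q := by
  funext i
  induction i using Fin.induction with
  | zero => simp [h0]
  | succ i ih =>
    rw [← symmDiff_symmDiff_cancel_left (p i.castSucc) (p i.succ), hq i, ih,
      ← symmDiff_initialImages hinj i, symmDiff_symmDiff_cancel_left]

lemma exists_eq_initialImages_of_mem_togglePaths {p : Fin (n + 1) → Set α} {t : Set α}
    (hp : p ∈ togglePaths ∅ t n) (hcard : t.ncard = n) :
    ∃ q : Fin n → α, q.Injective ∧ range q = t ∧ p = initialImages q := by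
  obtain ⟨h0, hlast, hstep⟩ := hp
  choose q hq using fun i => ncard_eq_one.1 (hstep i)
  have hsub : t ⊆ range q := hlast ▸ subset_range_of_symmDiff_eq_singleton h0 hq _
  have hle : (range q).ncard ≤ n := by
    simpa [← Nat.card_coe_set_eq] using Finite.card_range_le q
  have hrange : range q = t :=
    (eq_of_subset_of_ncard_le hsub (hcard ▸ hle) (finite_range q)).symm
  have hinj : q.Injective := by
    have hbij := (rangeFactorization_surjective (f := q)).bijective_of_nat_card_le
      (by rw [Nat.card_coe_set_eq, hrange, hcard, Nat.card_fin])
    exact fun a b hab => hbij.1 (Subtype.ext hab)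
  exact ⟨q, hinj, hrange, eq_initialImages_of_symmDiff_eq_singleton hinj h0 hq⟩

theorem card_togglePaths_empty {t : Set α} (ht : t.Finite) (hcard : t.ncard = n) :
    Nat.card (togglePaths ∅ t n) = n.factorial := by
  have hinj (e : Fin n ≃ t) : (Subtype.val ∘ e).Injective :=
    Subtype.val_injective.comp e.injective
  let f : (Fin n ≃ t) → togglePaths ∅ t n := fun e =>
    ⟨initialImages (Subtype.val ∘ e), by
      simpa [range_comp, e.range_eq_univ] using initialImages_mem_togglePaths (hinj e)⟩
  have hf : f.Bijective := by
    constructor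
    · intro e e' hee'
      ext j
      have := congrArg (fun p : togglePaths ∅ t n => p.1 j.castSucc ∆ p.1 j.succ) hee'
      simpa [f, symmDiff_initialImages (hinj _)] using this
    · rintro ⟨p, hp⟩
      obtain ⟨q, hq, hrange, rfl⟩ := exists_eq_initialImages_of_mem_togglePaths hp hcard
      exact ⟨(Equiv.ofInjective q hq).trans (Equiv.setCongr hrange), rfl⟩
  have : Finite t := ht
  have e₀ : t ≃ Fin n := Finite.equivFinOfCardEq (by rw [Nat.card_coe_set_eq, hcard])
  rw [← Nat.card_eq_of_bijective f hf, Nat.card_congr (Equiv.equivCongr (Equiv.refl _) e₀),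
    Nat.card_perm, Nat.card_fin]

lemma symmDiff_left_mem_togglePaths {p : Fin (n + 1) → Set α} {s t : Set α}
    (hp : p ∈ togglePaths s t n) (u : Set α) :
    (fun i => u ∆ p i) ∈ togglePaths (u ∆ s) (u ∆ t) n := by
  obtain ⟨h0, hlast, hstep⟩ := hp
  refine ⟨congrArg _ h0, congrArg _ hlast, fun i => ?_⟩
  rw [symmDiff_symmDiff_symmDiff_cancel_left, hstep]

def togglePathsEquivEmpty (s t : Set α) : togglePaths s t n ≃ togglePaths ∅ (s ∆ t) n where
  toFun p := ⟨fun i => s ∆ p.1 i, by simpa using symmDiff_left_mem_togglePaths p.2 s⟩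
  invFun p := ⟨fun i => s ∆ p.1 i, by
    simpa [← bot_eq_empty] using symmDiff_left_mem_togglePaths p.2 s⟩
  left_inv p := by ext1; simp
  right_inv p := by ext1; simp

theorem card_togglePaths {s t : Set α} (hfin : (s ∆ t).Finite) (hcard : (s ∆ t).ncard = n) :
    Nat.card (togglePaths s t n) = n.factorial :=
  (Nat.card_congr (togglePathsEquivEmpty s t)).trans (card_togglePaths_empty hfin hcard)

lemma finite_symmDiff_of_mem_togglePaths {p : Fin (n + 1) → Set α} {s t : Set α}
    (hp : p ∈ togglePaths s t n) (i : Fin (n + 1)) : (p i ∆ s).Finite := by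
  obtain ⟨h0, -, hstep⟩ := hp
  induction i using Fin.induction with
  | zero => simp [h0]
  | succ i ih =>
    refine ((finite_of_ncard_pos (hstep i).ge).union ih).subset ?_
    rw [symmDiff_comm (p i.castSucc)]
    exact symmDiff_triangle _ _ _

end Set

section QuotientRightRel

variable {G : Type*} [Group G] (H : Subgroup G)

local notation "π" => Quotient.mk (QuotientGroup.rightRel H)

lemma mk_rightRel_mul_of_mem {h : G} (hh : h ∈ H) (g : G) : π (h * g) = π g :=
  Quotient.sound (by simpa [QuotientGroup.rightRel_apply] using hh)

lemma mul_preimage_mk_rightRel (s : Set (Quotient (QuotientGroup.rightRel H))) :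
    (H : Set G) * π ⁻¹' s = π ⁻¹' s := by
  refine subset_antisymm ?_ fun g hg => ⟨1, H.one_mem, g, hg, one_mul g⟩
  rintro _ ⟨h, hh, g, hg, rfl⟩
  simpa [Set.mem_preimage, mk_rightRel_mul_of_mem H hh] using hg

lemma preimage_image_mk_rightRel {X : Set G} (hX : (H : Set G) * X = X) :
    π ⁻¹' (π '' X) = X := by
  refine subset_antisymm ?_ (Set.subset_preimage_image _ _)
  rintro g ⟨x, hx, hxg⟩
  have hgx : x * g⁻¹ ∈ H := QuotientGroup.rightRel_apply.1 (Quotient.exact hxg.symm)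
  rw [← hX]
  exact ⟨(x * g⁻¹)⁻¹, H.inv_mem hgx, x, hx, by group⟩

lemma image_mk_rightRel_symmDiff {X Y : Set G} (hX : (H : Set G) * X = X)
    (hY : (H : Set G) * Y = Y) : π '' (X ∆ Y) = (π '' X) ∆ (π '' Y) := by
  conv_lhs => rw [← preimage_image_mk_rightRel H hX, ← preimage_image_mk_rightRel H hY,
    ← Set.preimage_symmDiff, Set.image_preimage_eq _ Quotient.mk_surjective]

lemma hFin_iff_finite_image_mk_rightRel {X : Set G} : HFin H X ↔ (π '' X).Finite := by
  classical
  constructor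
  · rintro ⟨F, hF⟩
    refine ((F : Set G).toFinite.image π).subset ?_
    rintro _ ⟨g, hg, rfl⟩
    obtain ⟨h, hh, f, hf, rfl⟩ := hF hg
    exact ⟨f, hf, (mk_rightRel_mul_of_mem H hh f).symm⟩
  · intro hfin
    refine ⟨hfin.toFinset.image Quotient.out, fun g hg => ?_⟩
    have hout : (π g).out * g⁻¹ ∈ H :=
      QuotientGroup.rightRel_apply.1 (Quotient.exact (Quotient.out_eq (π g)).symm)
    refine ⟨((π g).out * g⁻¹)⁻¹, H.inv_mem hout, (π g).out, ?_, by group⟩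
    simpa using ⟨g, hg, rfl⟩

lemma hFin_preimage_mk_rightRel_iff {s : Set (Quotient (QuotientGroup.rightRel H))} :
    HFin H (π ⁻¹' s) ↔ s.Finite := by
  rw [hFin_iff_finite_image_mk_rightRel, Set.image_preimage_eq _ Quotient.mk_surjective]

variable {H} in
lemma HFin.symmDiff_trans {X Y Z : Set G} (hXY : HFin H (X ∆ Y)) (hYZ : HFin H (Y ∆ Z)) :
    HFin H (X ∆ Z) := by
  rw [hFin_iff_finite_image_mk_rightRel] at *
  refine (hXY.union hYZ).subset ?_
  rw [← Set.image_union]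
  exact Set.image_mono (symmDiff_triangle _ _ _)

lemma cosetCount_eq_ncard (X : Set G) : cosetCount H X = (π '' X).ncard :=
  Nat.card_coe_set_eq _

end QuotientRightRel

namespace CosetGraph

variable {G : Type*} [Group G] (H : Subgroup G) (A : Set G)

local notation "π" => Quotient.mk (QuotientGroup.rightRel H)

def vertices : Set (Set G) := {B | (H : Set G) * B = B ∧ HFin H (B ∆ A)}

def geodesics (B C : Set G) (n : ℕ) : Set (Fin (n + 1) → Set G) :=
  {p | p 0 = B ∧ p (Fin.last n) = C ∧ (∀ i, p i ∈ vertices H A) ∧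
    ∀ i : Fin n, cosetCount H (p i.castSucc ∆ p i.succ) = 1}

variable {H A}

def geodesicsEquivTogglePaths {B C : Set G} (hB : B ∈ vertices H A) (hC : C ∈ vertices H A)
    (n : ℕ) : geodesics H A B C n ≃ Set.togglePaths (π '' B) (π '' C) n where
  toFun p := ⟨fun i => π '' p.1 i, by
    obtain ⟨h0, hlast, hmem, hstep⟩ := p.2
    refine ⟨congrArg _ h0, congrArg _ hlast, fun i => ?_⟩
    rw [← image_mk_rightRel_symmDiff H (hmem _).1 (hmem _).1, ← cosetCount_eq_ncard, hstep]⟩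
  invFun t := ⟨fun i => π ⁻¹' t.1 i, by
    obtain ⟨h0, hlast, hstep⟩ := t.2
    refine ⟨(congrArg _ h0).trans (preimage_image_mk_rightRel H hB.1),
      (congrArg _ hlast).trans (preimage_image_mk_rightRel H hC.1),
      fun i => ⟨mul_preimage_mk_rightRel H _, ?_⟩, fun i => ?_⟩
    · have hpre : π ⁻¹' (t.1 i ∆ (π '' B)) = (π ⁻¹' t.1 i) ∆ B := by
        rw [Set.preimage_symmDiff, preimage_image_mk_rightRel H hB.1]
      refine HFin.symmDiff_trans (hpre ▸ ?_) hB.2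
      exact (hFin_preimage_mk_rightRel_iff H).2 (Set.finite_symmDiff_of_mem_togglePaths t.2 i)
    · rw [cosetCount_eq_ncard, ← Set.preimage_symmDiff,
        Set.image_preimage_eq _ Quotient.mk_surjective, hstep]⟩
  left_inv p := Subtype.ext (funext fun i => preimage_image_mk_rightRel H (p.2.2.2.1 i).1)
  right_inv t := Subtype.ext (funext fun i => Set.image_preimage_eq _ Quotient.mk_surjective)

theorem card_geodesics {B C : Set G} (hB : B ∈ vertices H A) (hC : C ∈ vertices H A) :
    Nat.card (geodesics H A B C (cosetCount H (B ∆ C))) = (cosetCount H (B ∆ C)).factorial := by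
  have hBC := image_mk_rightRel_symmDiff H hB.1 hC.1
  rw [Nat.card_congr (geodesicsEquivTogglePaths hB hC _), Set.card_togglePaths]
  · rw [← hBC, ← hFin_iff_finite_image_mk_rightRel]
    exact hB.2.symmDiff_trans (symmDiff_comm C A ▸ hC.2)
  · rw [← hBC, cosetCount_eq_ncard]

end CosetGraph

theorem stmt_13_general {G : Type*} [Group G] (H : Subgroup G) (A : Set G)
    (M : Set (Set G))
    (hM : M = {B : Set G | (H : Set G) * B = B ∧ HFin H (symmDiff B A)})
    (d : Set G → Set G → ℕ) (hd : ∀ B C, d B C = cosetCount H (symmDiff B C))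
    (B C : Set G) (hB : B ∈ M) (hC : C ∈ M) (n : ℕ) (hn : d B C = n) :
    Nat.card {p : Fin (n + 1) → Set G //
      p 0 = B ∧ p (Fin.last n) = C ∧ (∀ i, p i ∈ M) ∧
      ∀ i : Fin n, d (p i.castSucc) (p i.succ) = 1} = Nat.factorial n := by
  subst hM
  obtain rfl : d = fun B C => cosetCount H (symmDiff B C) := funext₂ hd
  subst hn
  exact CosetGraph.card_geodesics hB hC

/-- In the graph `Γ` on `M` where vertices at distance `1` are adjacent, there are
exactly `n!` geodesics joining `B` and `C` when `d(B,C) = n`.  A geodesic is a path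
`B = p 0, p 1, …, p n = C` through `M` with consecutive vertices at distance `1`. -/
theorem stmt_13 {G : Type*} [Group G] (H : Subgroup G) (A : Set G)
    (hHA : (H : Set G) * A = A)
    (hai : ∀ x : G, HFin H (symmDiff A ((fun a => a * x) '' A)))
    (M : Set (Set G))
    (hM : M = {B : Set G | (H : Set G) * B = B ∧ HFin H (symmDiff B A)})
    (d : Set G → Set G → ℕ) (hd : ∀ B C, d B C = cosetCount H (symmDiff B C))
    (B C : Set G) (hB : B ∈ M) (hC : C ∈ M) (n : ℕ) (hn : d B C = n) :
    Nat.card {p : Fin (n + 1) → Set G //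
      p 0 = B ∧ p (Fin.last n) = C ∧ (∀ i, p i ∈ M) ∧
      ∀ i : Fin n, d (p i.castSucc) (p i.succ) = 1} = Nat.factorial n :=
  stmt_13_general H A M hM d hd B C hB hC n hn
end

section
/- With Γ as above, for a fixed coset Hb, removing all edges of Γ corresponding to the coset Hb disconnects Γ into the two vertex sets {C ∈ M : Hb ⊆ C} and {C ∈ M : Hb ∩ C = ∅}. -/
open scoped Pointwise

lemma hmul_mem_iff {G : Type*} [Group G] (H : Subgroup G) {B : Set G}
    (hB : (H : Set G) * B = B) {h x : G} (hh : h ∈ H) : h * x ∈ B ↔ x ∈ B := by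
  constructor
  · intro hx
    have h2 : h⁻¹ * (h * x) ∈ (H : Set G) * B :=
      Set.mul_mem_mul (show h⁻¹ ∈ (H : Set G) from inv_mem hh) hx
    simpa [hB, ← mul_assoc] using h2
  · intro hx
    have h2 : h * x ∈ (H : Set G) * B := Set.mul_mem_mul hh hx
    rwa [hB] at h2

lemma coset_mem_iff {G : Type*} [Group G] (H : Subgroup G) {B : Set G}
    (hB : (H : Set G) * B = B) {x y : G} (hxy : y * x⁻¹ ∈ H) : y ∈ B ↔ x ∈ B := by
  have := hmul_mem_iff H hB (x := x) hxy
  simpa [mul_assoc] using this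

lemma mem_coset_iff {G : Type*} [Group G] (H : Subgroup G) {x b : G} :
    x ∈ (H : Set G) * ({b} : Set G) ↔ x * b⁻¹ ∈ H := by
  constructor
  · rintro ⟨h, hh, y, rfl, rfl⟩
    simpa [mul_assoc] using hh
  · intro hx
    exact ⟨x * b⁻¹, hx, b, rfl, by group⟩

/-- The key edge lemma. -/
lemma edge_lemma {G : Type*} [Group G] (H : Subgroup G) {b : G} {B C : Set G}
    (hB : (H : Set G) * B = B) (hC : (H : Set G) * C = C)
    (h1 : cosetCount H (symmDiff B C) = 1)
    (h2 : symmDiff B C ≠ (H : Set G) * ({b} : Set G)) :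
    ((H : Set G) * ({b} : Set G) ⊆ B ↔ (H : Set G) * ({b} : Set G) ⊆ C) := by
  -- show Hb ∩ (B∆C) = ∅, i.e. every x ∈ Hb has x ∈ B ↔ x ∈ C
  have key : ∀ x ∈ (H : Set G) * ({b} : Set G), (x ∈ B ↔ x ∈ C) := by
    intro x hx
    by_contra hne
    have hxs : x ∈ symmDiff B C := by
      rw [Set.mem_symmDiff]; tauto
    -- the image has card one
    rw [cosetCount, Nat.card_eq_one_iff_exists] at h1
    obtain ⟨⟨q, hqmem⟩, hq⟩ := h1
    have hqx : q = Quotient.mk (QuotientGroup.rightRel H) x := by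
      have hx' : Quotient.mk (QuotientGroup.rightRel H) x ∈
          (Quotient.mk (QuotientGroup.rightRel H) '' symmDiff B C) := ⟨x, hxs, rfl⟩
      have := hq ⟨_, hx'⟩
      exact (congrArg Subtype.val this).symm
    apply h2
    ext y
    constructor
    · intro hy
      have hy' : Quotient.mk (QuotientGroup.rightRel H) y ∈
          (Quotient.mk (QuotientGroup.rightRel H) '' symmDiff B C) := ⟨y, hy, rfl⟩
      have : Quotient.mk (QuotientGroup.rightRel H) y
          = Quotient.mk (QuotientGroup.rightRel H) x := by
        have h4 := congrArg Subtype.val (hq ⟨_, hy'⟩)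
        simpa [hqx] using h4
      have hrel : y * x⁻¹ ∈ H := by
        have h3 : (QuotientGroup.rightRel H) y x := Quotient.exact this
        have h4 : x * y⁻¹ ∈ H := (QuotientGroup.rightRel_apply).mp h3
        simpa using inv_mem h4
      have hxb : x * b⁻¹ ∈ H := (mem_coset_iff H).mp hx
      have : y * b⁻¹ ∈ H := by
        have := mul_mem hrel hxb
        simpa [mul_assoc] using this
      exact (mem_coset_iff H).mpr this
    · intro hy
      have hyb : y * b⁻¹ ∈ H := (mem_coset_iff H).mp hy
      have hxb : x * b⁻¹ ∈ H := (mem_coset_iff H).mp hx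
      have hyx : y * x⁻¹ ∈ H := by
        have := mul_mem hyb (inv_mem hxb)
        simpa [mul_assoc] using this
      have hBiff := coset_mem_iff H hB hyx
      have hCiff := coset_mem_iff H hC hyx
      rw [Set.mem_symmDiff] at hxs ⊢
      tauto
  constructor
  · intro hsub x hx; exact (key x hx).mp (hsub hx)
  · intro hsub x hx; exact (key x hx).mpr (hsub hx)

/-- Removing from `Γ` all edges corresponding to the coset `Hb` disconnects `Γ` into
the two vertex sets `{C ∈ M : Hb ⊆ C}` and `{C ∈ M : Hb ∩ C = ∅}`: every `C ∈ M`
belongs to one of the two sets, and no path in the remaining graph joins the two. -/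
theorem stmt_14 {G : Type*} [Group G] (H : Subgroup G) (A : Set G)
    (hHA : (H : Set G) * A = A)
    (hai : ∀ x : G, HFin H (symmDiff A ((fun a => a * x) '' A)))
    (M : Set (Set G))
    (hM : M = {B : Set G | (H : Set G) * B = B ∧ HFin H (symmDiff B A)})
    (d : Set G → Set G → ℕ) (hd : ∀ B C, d B C = cosetCount H (symmDiff B C))
    (b : G)
    (Γb : SimpleGraph {B : Set G // B ∈ M})
    (hΓb : Γb = SimpleGraph.fromRel (fun B C : {B : Set G // B ∈ M} =>
      d (B : Set G) (C : Set G) = 1 ∧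
      symmDiff (B : Set G) (C : Set G) ≠ (H : Set G) * {b})) :
    (∀ C ∈ M, (H : Set G) * {b} ⊆ C ∨ Disjoint ((H : Set G) * {b}) C) ∧
      (∀ B C : {B : Set G // B ∈ M}, Γb.Reachable B C →
        ((H : Set G) * {b} ⊆ (B : Set G) ↔ (H : Set G) * {b} ⊆ (C : Set G))) := by
  have hMem : ∀ B ∈ M, (H : Set G) * B = B := by
    intro B hB; rw [hM] at hB; exact hB.1
  constructor
  · intro C hC
    rcases Set.eq_empty_or_nonempty (((H : Set G) * {b}) ∩ C) with he | ⟨x, hxb, hxC⟩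
    · exact Or.inr (Set.disjoint_iff_inter_eq_empty.mpr he)
    · left
      intro y hy
      have hyb : y * b⁻¹ ∈ H := (mem_coset_iff H).mp hy
      have hxb' : x * b⁻¹ ∈ H := (mem_coset_iff H).mp hxb
      have hyx : y * x⁻¹ ∈ H := by
        have := mul_mem hyb (inv_mem hxb')
        simpa [mul_assoc] using this
      exact (coset_mem_iff H (hMem C hC) hyx).mpr hxC
  · intro B C hr
    have hadj : ∀ B C : {B : Set G // B ∈ M}, Γb.Adj B C →
        ((H : Set G) * {b} ⊆ (B : Set G) ↔ (H : Set G) * {b} ⊆ (C : Set G)) := by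
      intro B C hBC
      rw [hΓb, SimpleGraph.fromRel_adj] at hBC
      rcases hBC.2 with ⟨h1, h2⟩ | ⟨h1, h2⟩
      · rw [hd] at h1
        exact edge_lemma H (hMem _ B.2) (hMem _ C.2) h1 h2
      · rw [hd] at h1
        exact (edge_lemma H (hMem _ C.2) (hMem _ B.2) h1 h2).symm
    obtain ⟨p⟩ := hr
    induction p with
    | nil => rfl
    | cons h p ih => exact (hadj _ _ h).trans ih
end

section
/- Let G act on a tree T without inversions, and suppose the action is non-trivial (no global fixed vertex) and no element of G shifts any edge (there is no g ∈ G and edge e with e > ge or ge > e). Then G fixes an end of T; equivalently, G is the union of a strictly ascending chain of vertex stabilizers G_{v_1} ≤ G_{v_2} ≤ … along a ray v_1, v_2, … of adjacent vertices. -/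
/-!
Every `g ∈ G` fixes a vertex: at a vertex `x` minimising `d(x, g x) > 0`, the edge from `x`
towards `g x` would be inverted or shifted by `g`. An isometry of a tree fixing some vertex fixes
the midpoint of `[x, g x]` for every `x`; if `g h x = x` then `h x = g⁻¹ x`, so `g` and `h` have a
common fixed vertex. Hence, for each vertex `v`, the fixed vertices of all elements moving `v` lie
behind one and the same neighbour of `v`. Following these neighbours gives a ray along which the
stabilizers increase, and an element fixing none of its vertices would bring each successive
vertex of the ray one step closer to its fixed set, which is impossible.
-/

/-- For directed edges `e = (u,v)` and `f = (u',v')` of a tree `T`, `e > f` means the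
smallest subtree containing both consists of a geodesic along which the vertices occur
in the order `u, v, …, u', v'` (so `e` and `f` are coherently oriented). -/
def EdgeGT {V : Type*} (T : SimpleGraph V) (u v u' v' : V) : Prop :=
  T.Adj u v ∧ T.Adj u' v' ∧
    T.dist u v' = T.dist v u' + 2 ∧
    T.dist u u' = T.dist v u' + 1 ∧
    T.dist v v' = T.dist v u' + 1

open SimpleGraph Walk

namespace SimpleGraph.IsTree

variable {V : Type*} {T : SimpleGraph V} {x y u v w w' a b : V}

lemma length_eq_dist (hT : T.IsTree) {p : T.Walk x y} (hp : p.IsPath) :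
    p.length = T.dist x y := by
  obtain ⟨q, hq, hlen⟩ := hT.connected.exists_path_of_dist x y
  rw [(hT.existsUnique_path x y).unique hp hq, hlen]

lemma mem_support_iff_dist_add_dist (hT : T.IsTree) {p : T.Walk x y} (hp : p.IsPath) :
    u ∈ p.support ↔ T.dist x u + T.dist u y = T.dist x y := by
  classical
  constructor
  · intro hu
    rw [← hT.length_eq_dist (hp.takeUntil hu), ← hT.length_eq_dist (hp.dropUntil hu),
      ← hT.length_eq_dist hp, ← length_append, take_spec]
  · intro h
    obtain ⟨q, -, hq⟩ := hT.connected.exists_path_of_dist x u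
    obtain ⟨r, -, hr⟩ := hT.connected.exists_path_of_dist u y
    have hqr : (q.append r).IsPath :=
      (q.append r).isPath_of_length_eq_dist (by rw [length_append, hq, hr, h])
    rw [(hT.existsUnique_path x y).unique hp hqr, mem_support_append_iff]
    exact Or.inl q.end_mem_support

lemma eq_of_dist_add_dist (hT : T.IsTree) (ha : T.dist x a + T.dist a y = T.dist x y)
    (hb : T.dist x b + T.dist b y = T.dist x y) (hab : T.dist x a = T.dist x b) : a = b := by
  classical
  obtain ⟨p, hp, -⟩ := hT.connected.exists_path_of_dist x y
  have ha' := (hT.mem_support_iff_dist_add_dist hp).2 ha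
  have hb' := (hT.mem_support_iff_dist_add_dist hp).2 hb
  rw [← p.getVert_length_takeUntil ha', ← p.getVert_length_takeUntil hb',
    hT.length_eq_dist (hp.takeUntil ha'), hT.length_eq_dist (hp.takeUntil hb'), hab]

lemma exists_adj_dist_add_one (hT : T.IsTree) (h : x ≠ y) :
    ∃ w, T.Adj x w ∧ T.dist w y + 1 = T.dist x y := by
  obtain ⟨p, hp, hlen⟩ := hT.connected.exists_path_of_dist x y
  cases p with
  | nil => exact absurd rfl h
  | cons hxw q => exact ⟨_, hxw, by rw [← hlen, length_cons, hT.length_eq_dist hp.of_cons]⟩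

lemma eq_of_adj_of_dist_add_one (hT : T.IsTree) (hw : T.Adj x w) (hw' : T.Adj x w')
    (h : T.dist w y + 1 = T.dist x y) (h' : T.dist w' y + 1 = T.dist x y) : w = w' := by
  have hxw := dist_eq_one_iff_adj.2 hw
  have hxw' := dist_eq_one_iff_adj.2 hw'
  exact hT.eq_of_dist_add_dist (x := x) (y := y) (by omega) (by omega) (hxw.trans hxw'.symm)

lemma dist_add_one_eq_or_of_adj (hT : T.IsTree) (hvw : T.Adj v w) (y : V) :
    T.dist w y + 1 = T.dist v y ∨ T.dist v y + 1 = T.dist w y := by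
  have := hT.dist_eq_dist_add_one_of_adj y hvw
  rw [dist_comm (u := y), dist_comm (u := y)] at this
  omega

lemma dist_eq_dist_add_dist_of_adj (hT : T.IsTree) (hvw : T.Adj v w)
    (hx : T.dist w x + 1 = T.dist v x) (hy : T.dist v y + 1 = T.dist w y) :
    T.dist x y = T.dist x v + T.dist v y := by
  obtain ⟨p, hp, hpl⟩ := hT.connected.exists_path_of_dist w x
  obtain ⟨q, hq, hql⟩ := hT.connected.exists_path_of_dist v y
  have hdisj : ∀ u ∈ p.support, u ∉ q.support := by
    intro u hup huq
    have := (hT.mem_support_iff_dist_add_dist hp).1 hup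
    have := (hT.mem_support_iff_dist_add_dist hq).1 huq
    have : T.dist v x ≤ T.dist v u + T.dist u x := hT.connected.dist_triangle
    have : T.dist w y ≤ T.dist w u + T.dist u y := hT.connected.dist_triangle
    have := hT.dist_add_one_eq_or_of_adj hvw u
    omega
  have hpath : (p.reverse.append (cons hvw.symm q)).IsPath := by
    rw [isPath_def, support_append, support_cons, List.tail_cons, support_reverse]
    exact (List.nodup_reverse.2 hp.support_nodup).append hq.support_nodup
      fun u hup huq => hdisj u (List.mem_reverse.1 hup) huq
  have := hT.length_eq_dist hpath
  rw [length_append, length_reverse, length_cons, hpl, hql] at this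
  rw [dist_comm (u := x) (v := v)]
  omega

end SimpleGraph.IsTree

namespace SimpleGraph

variable {V : Type*} {T : SimpleGraph V}

lemma Connected.dist_smul {G : Type*} [Group G] [MulAction G V] (hT : T.Connected)
    (hact : ∀ (g : G) (u v : V), T.Adj u v → T.Adj (g • u) (g • v)) (g : G) (x y : V) :
    T.dist (g • x) (g • y) = T.dist x y := by
  have key : ∀ (k : G) (a b : V), T.dist (k • a) (k • b) ≤ T.dist a b := fun k a b => by
    obtain ⟨p, hp⟩ := hT.exists_walk_length_eq_dist a b
    exact (dist_le (p.map ⟨(k • ·), hact k _ _⟩)).trans (by rw [length_map, hp])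
  exact le_antisymm (key g x y) (by simpa using key g⁻¹ (g • x) (g • y))

namespace IsTree

variable {f : V → V} {x y u a b v y₀ : V}

lemma apply_eq_self_of_dist_add_dist (hT : T.IsTree) (hf : ∀ x y, T.dist (f x) (f y) = T.dist x y)
    (ha : f a = a) (hb : f b = b) (hu : T.dist a u + T.dist u b = T.dist a b) : f u = u := by
  have h₁ : T.dist a (f u) = T.dist a u := by rw [← hf a u, ha]
  have h₂ : T.dist (f u) b = T.dist u b := by rw [← hf u b, hb]
  exact hT.eq_of_dist_add_dist (by rw [h₁, h₂, hu]) hu h₁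

lemma exists_adj_forall_apply_eq_self (hT : T.IsTree)
    (hf : ∀ x y, T.dist (f x) (f y) = T.dist x y) (hv : f v ≠ v) (hy₀ : f y₀ = y₀) :
    ∃ w, T.Adj v w ∧ ∀ y, f y = y → T.dist w y + 1 = T.dist v y := by
  obtain ⟨w, hvw, hw⟩ := hT.exists_adj_dist_add_one fun h : v = y₀ => hv (h ▸ hy₀)
  refine ⟨w, hvw, fun y hy => (hT.dist_add_one_eq_or_of_adj hvw y).resolve_right fun h => ?_⟩
  exact hv (hT.apply_eq_self_of_dist_add_dist hf hy₀ hy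
    (hT.dist_eq_dist_add_dist_of_adj hvw hw h).symm)

lemma exists_fixed_midpoint (hT : T.IsTree)
    (hf : ∀ x y, T.dist (f x) (f y) = T.dist x y) (hfix : ∃ y, f y = y) (x : V) :
    ∃ m, f m = m ∧ T.dist x m + T.dist m (f x) = T.dist x (f x) ∧
      T.dist m (f x) = T.dist x m := by
  by_cases hx : f x = x
  · exact ⟨x, hx, by simp [hx]⟩
  -- the midpoint is the fixed vertex nearest to `x`
  obtain ⟨m, hm : f m = m, hmin⟩ :=
    (InvImage.wf (T.dist x) wellFounded_lt).has_min {y | f y = y} hfix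
  have hmfx : T.dist m (f x) = T.dist x m := by rw [dist_comm (u := x), ← hf m x, hm]
  refine ⟨m, hm, ?_, hmfx⟩
  obtain ⟨s, hms, hs⟩ := hT.exists_adj_dist_add_one fun h : m = x => hx (h ▸ hm)
  have hfs : f s ≠ s := fun hfs => hmin s hfs (by
    change T.dist x s < T.dist x m
    rw [dist_comm (u := x) (v := s), dist_comm (u := x) (v := m)]
    omega)
  have hmfs : T.Adj m (f s) := by
    have := hf m s
    rwa [hm, dist_eq_one_iff_adj.2 hms, dist_eq_one_iff_adj] at this
  have hfsfx : T.dist (f s) (f x) + 1 = T.dist m (f x) := by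
    rw [hf, hmfx, dist_comm (u := x), hs]
  have hside := (hT.dist_add_one_eq_or_of_adj hms (f x)).resolve_left fun h =>
    hfs (hT.eq_of_adj_of_dist_add_one hms hmfs h hfsfx).symm
  exact (hT.dist_eq_dist_add_dist_of_adj hms hs hside).symm

lemma exists_apply_eq_self (hT : T.IsTree) (hf : ∀ x y, T.dist (f x) (f y) = T.dist x y)
    (hinv : ∀ u v, T.Adj u v → ¬(f u = v ∧ f v = u))
    (hshift : ∀ u v, T.Adj u v → ¬EdgeGT T u v (f u) (f v)) : ∃ x, f x = x := by
  by_contra! hfree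
  obtain ⟨x₀⟩ := hT.connected.nonempty
  obtain ⟨x, -, hmin⟩ :=
    (InvImage.wf (fun x => T.dist x (f x)) wellFounded_lt).has_min Set.univ ⟨x₀, trivial⟩
  obtain ⟨w, hxw, hw⟩ := hT.exists_adj_dist_add_one (hfree x).symm
  have hfxw : T.Adj (f x) (f w) :=
    dist_eq_one_iff_adj.1 ((hf x w).trans (dist_eq_one_iff_adj.2 hxw))
  have hwfw : T.dist x (f x) ≤ T.dist w (f w) := not_lt.1 (hmin w trivial)
  have := dist_eq_one_iff_adj.2 hxw
  have := dist_eq_one_iff_adj.2 hfxw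
  have := dist_comm (G := T) (u := x) (v := f x)
  have := dist_comm (G := T) (u := w) (v := f x)
  have := dist_comm (G := T) (u := w) (v := f w)
  rcases hT.dist_add_one_eq_or_of_adj hfxw x with hx | hx
  · -- `f w` lies between `x` and `f x`: by minimality `d(x, f x) = 1`, so `x w` is inverted
    have hw' := (hT.dist_add_one_eq_or_of_adj hfxw w).resolve_left (by omega)
    have := hT.dist_eq_dist_add_dist_of_adj hfxw hx hw'
    refine hinv x w hxw ⟨(hT.connected.dist_eq_zero_iff.1 ?_).symm,
      hT.connected.dist_eq_zero_iff.1 ?_⟩ <;> omega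
  · have : T.dist w (f w) ≤ T.dist w (f x) + T.dist (f x) (f w) := hT.connected.dist_triangle
    have := dist_comm (G := T) (u := x) (v := f w)
    exact hshift x w hxw ⟨hxw, hfxw, by omega, by omega, by omega⟩

end IsTree

end SimpleGraph

def IsTowardFixedPoints (G : Type*) {V : Type*} [SMul G V] (T : SimpleGraph V) (v w : V) :
    Prop :=
  T.Adj v w ∧ ∀ g : G, g • v ≠ v → ∀ y, g • y = y → T.dist w y + 1 = T.dist v y

section GroupAction

variable {G V : Type*} [Group G] [MulAction G V] {T : SimpleGraph V}

lemma SimpleGraph.IsTree.exists_smul_eq_self_and_smul_eq_self (hT : T.IsTree)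
    (hdist : ∀ (g : G) (x y : V), T.dist (g • x) (g • y) = T.dist x y)
    (helliptic : ∀ g : G, ∃ x : V, g • x = x) (g h : G) : ∃ z : V, g • z = z ∧ h • z = z := by
  obtain ⟨x, hx⟩ := helliptic (g * h)
  have hy : g⁻¹ • x = h • x := by rw [inv_smul_eq_iff, ← mul_smul, hx]
  obtain ⟨m, hm, hxm, hmy⟩ := hT.exists_fixed_midpoint (hdist h) (helliptic h) x
  obtain ⟨p, hp, hxp, hpy⟩ := hT.exists_fixed_midpoint (hdist g⁻¹) (helliptic g⁻¹) x
  rw [hy] at hxp hpy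
  obtain rfl : m = p := hT.eq_of_dist_add_dist hxm hxp (by omega)
  exact ⟨m, by rwa [inv_smul_eq_iff, eq_comm] at hp, hm⟩


lemma exists_isTowardFixedPoints (hT : T.IsTree)
    (hdist : ∀ (g : G) (x y : V), T.dist (g • x) (g • y) = T.dist x y)
    (hcommon : ∀ g h : G, ∃ z : V, g • z = z ∧ h • z = z) {v : V} (hv : ∃ g : G, g • v ≠ v) :
    ∃ w, IsTowardFixedPoints G T v w := by
  obtain ⟨g₀, hg₀⟩ := hv
  obtain ⟨y₀, hy₀, -⟩ := hcommon g₀ g₀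
  obtain ⟨w, hvw, hw⟩ := hT.exists_adj_forall_apply_eq_self (hdist g₀) hg₀ hy₀
  refine ⟨w, hvw, fun g hg y hy => ?_⟩
  obtain ⟨z, hz₀, hz⟩ := hcommon g₀ g
  obtain ⟨w', hvw', hw'⟩ := hT.exists_adj_forall_apply_eq_self (hdist g) hg hy
  rw [hT.eq_of_adj_of_dist_add_one hvw hvw' (hw z hz₀) (hw' z hz)]
  exact hw' y hy

namespace IsTowardFixedPoints

variable {v w w' y : V} {g k : G}

lemma eq (hT : T.IsTree) (hg : g • v ≠ v) (hy : g • y = y) (h : IsTowardFixedPoints G T v w)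
    (h' : IsTowardFixedPoints G T v w') : w = w' :=
  hT.eq_of_adj_of_dist_add_one h.1 h'.1 (h.2 g hg y hy) (h'.2 g hg y hy)

lemma smul (hdist : ∀ (g : G) (x y : V), T.dist (g • x) (g • y) = T.dist x y) (hk : k • v = v)
    (h : IsTowardFixedPoints G T v w) : IsTowardFixedPoints G T v (k • w) := by
  refine ⟨dist_eq_one_iff_adj.1 ?_, fun g hg y hy => ?_⟩
  · rw [← hk, hdist]
    exact dist_eq_one_iff_adj.2 h.1
  · have hg' : (k⁻¹ * g * k) • v ≠ v := by
      rwa [mul_smul, mul_smul, hk, Ne, inv_smul_eq_iff, hk]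
    have hy' : (k⁻¹ * g * k) • k⁻¹ • y = k⁻¹ • y := by simp [mul_smul, hy]
    have := h.2 _ hg' _ hy'
    rwa [← hdist k w, ← hdist k v, hk, smul_inv_smul] at this

lemma stabilizer_le (hT : T.IsTree)
    (hdist : ∀ (g : G) (x y : V), T.dist (g • x) (g • y) = T.dist x y)
    (helliptic : ∀ g : G, ∃ x : V, g • x = x) (hv : ∃ g : G, g • v ≠ v)
    (h : IsTowardFixedPoints G T v w) : MulAction.stabilizer G v ≤ MulAction.stabilizer G w := by
  intro k hk
  obtain ⟨g, hg⟩ := hv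
  obtain ⟨y, hy⟩ := helliptic g
  exact ((h.smul hdist hk).eq hT hg hy h :)

end IsTowardFixedPoints

section Ray

variable {s : ℕ → V}

lemma dist_add_eq_of_isTowardFixedPoints (hs : ∀ n, IsTowardFixedPoints G T (s n) (s (n + 1)))
    {g : G} {y : V} (hy : g • y = y) (m : ℕ) {k : ℕ}
    (hg : ∀ i < k, g • s (m + i) ≠ s (m + i)) : T.dist (s (m + k)) y + k = T.dist (s m) y := by
  induction k with
  | zero => rfl
  | succ k ih =>
    have := (hs (m + k)).2 g (hg k k.lt_succ_self) y hy
    have := ih fun i hi => hg i (by omega)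
    rw [← add_assoc m k 1]
    omega

lemma exists_mem_stabilizer_of_isTowardFixedPoints
    (hs : ∀ n, IsTowardFixedPoints G T (s n) (s (n + 1))) (helliptic : ∀ g : G, ∃ x : V, g • x = x)
    (g : G) : ∃ n, g ∈ MulAction.stabilizer G (s n) := by
  by_contra! hg
  obtain ⟨y, hy⟩ := helliptic g
  have := dist_add_eq_of_isTowardFixedPoints hs hy 0 (k := T.dist (s 0) y + 1)
    fun i _ => hg (0 + i)
  omega

lemma injective_of_isTowardFixedPoints (hs : ∀ n, IsTowardFixedPoints G T (s n) (s (n + 1)))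
    (hmono : Monotone fun n => MulAction.stabilizer G (s n))
    (hmove : ∀ n, ∃ g : G, g • s n ≠ s n) (helliptic : ∀ g : G, ∃ x : V, g • x = x) :
    Function.Injective s := by
  suffices hne : ∀ m k, s (m + k + 1) ≠ s m by
    intro i j hij
    by_contra hij'
    rcases Nat.lt_or_gt_of_ne hij' with h | h
    · obtain ⟨k, rfl⟩ := Nat.exists_eq_add_of_lt h
      exact hne i k hij.symm
    · obtain ⟨k, rfl⟩ := Nat.exists_eq_add_of_lt h
      exact hne j k hij
  intro m k heq
  obtain ⟨g, hg⟩ := hmove (m + k)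
  obtain ⟨y, hy⟩ := helliptic g
  have := dist_add_eq_of_isTowardFixedPoints hs hy m (k := k + 1)
    fun i hi hfix => hg (hmono (by omega : m + i ≤ m + k) hfix)
  rw [← add_assoc m k 1, heq] at this
  omega

end Ray

end GroupAction

/-- If `G` acts on a tree `T` without inversions, the action is non-trivial (no global
fixed vertex), and no element of `G` shifts any edge, then `G` fixes an end of `T`:
`G` is the union of an ascending chain of vertex stabilizers, none equal to `G`, along
a ray of adjacent vertices. -/
theorem stmt_17 {G V : Type*} [Group G] [MulAction G V] (T : SimpleGraph V)
    (hT : T.IsTree) (hact : ∀ (g : G) (u v : V), T.Adj u v → T.Adj (g • u) (g • v))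
    (hninv : ∀ (g : G) (u v : V), T.Adj u v → ¬(g • u = v ∧ g • v = u))
    (hnontriv : ¬ ∃ v : V, ∀ g : G, g • v = v)
    (hnoshift : ∀ (g : G) (u v : V), T.Adj u v →
      ¬ EdgeGT T u v (g • u) (g • v) ∧ ¬ EdgeGT T (g • u) (g • v) u v) :
    ∃ v : ℕ → V, Function.Injective v ∧ (∀ n, T.Adj (v n) (v (n + 1))) ∧
      (∀ n, MulAction.stabilizer G (v n) ≤ MulAction.stabilizer G (v (n + 1))) ∧
      (∀ n, MulAction.stabilizer G (v n) ≠ ⊤) ∧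
      (∀ g : G, ∃ n, g ∈ MulAction.stabilizer G (v n)) := by
  have hdist := hT.connected.dist_smul hact
  have helliptic (g : G) : ∃ x : V, g • x = x :=
    hT.exists_apply_eq_self (hdist g) (hninv g) fun u v huv => (hnoshift g u v huv).1
  have hmove (v : V) : ∃ g : G, g • v ≠ v := by
    by_contra! hv
    exact hnontriv ⟨v, hv⟩
  choose next hnext using fun v => exists_isTowardFixedPoints hT hdist
    (hT.exists_smul_eq_self_and_smul_eq_self hdist helliptic) (hmove v)
  obtain ⟨v₀⟩ := hT.connected.nonempty
  let s (n : ℕ) : V := next^[n] v₀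
  have hs (n : ℕ) : IsTowardFixedPoints G T (s n) (s (n + 1)) := by
    simp only [s, Function.iterate_succ_apply']
    exact hnext _
  have hmono : Monotone fun n => MulAction.stabilizer G (s n) :=
    monotone_nat_of_le_succ fun n => (hs n).stabilizer_le hT hdist helliptic (hmove (s n))
  refine ⟨s, injective_of_isTowardFixedPoints hs hmono (fun n => hmove (s n)) helliptic,
    fun n => (hs n).1, fun n => hmono n.le_succ, fun n htop => ?_,
    exists_mem_stabilizer_of_isTowardFixedPoints hs helliptic⟩
  obtain ⟨g, hg⟩ := hmove (s n)
  exact hg ((Subgroup.eq_top_iff' _).1 htop g)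
end

section
/- Let E be a nested set of subsets of a set V (for all C, D ∈ E, one of C ⊆ D, C ⊆ D*, C* ⊆ D, C* ⊆ D* holds, where * denotes complement), closed under complementation, satisfying the finite interval condition: for C ⊆ D in E there are only finitely many E' ∈ E with C ⊆ E' ⊆ D. Suppose an abstract group H acts on V preserving E. If the quotient nested set also satisfies the finite interval condition and the preimage construction preserves nesting, then E is the directed edge set of a tree on which H acts. -/
/-!
Ordered by inclusion, `E` is a locally finite poset with an order-reversing involution `ᶜ` in
which no element lies below its own complement and any two elements are nested. Oriented edges
`x` and `y` start at the same vertex when `x = y` or `y` covers `xᶜ`; this is an equivalence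
relation, and the edge `x` joins the class of `x` to the class of `xᶜ`. Chains of covers fill
every interval, so the graph is connected, and every edge `c` is a bridge, since "lies on the
side of `c`" (`x ≤ c` or `cᶜ < x`) is constant along every other edge. The group acts on `E`
preserving inclusion and complements, so it acts on the vertices.
-/

open scoped Pointwise

universe u v

lemma SimpleGraph.Reachable.iff_of_forall_adj {V : Type*} {G : SimpleGraph V}
    {p : V → Prop} (hp : ∀ ⦃a b⦄, G.Adj a b → (p a ↔ p b)) {u v : V}
    (h : G.Reachable u v) : p u ↔ p v := by
  rw [SimpleGraph.reachable_iff_reflTransGen] at h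
  induction h with
  | refl => rfl
  | tail _ hab ih => exact ih.trans (hp hab)

class IsTreeSet (P : Type*) [PartialOrder P] [Compl P] : Prop where
  compl_compl : ∀ x : P, xᶜᶜ = x
  compl_le_compl : ∀ {x y : P}, x ≤ y → yᶜ ≤ xᶜ
  not_le_compl : ∀ x : P, ¬ x ≤ xᶜ
  nested : ∀ x y : P, x ≤ y ∨ x ≤ yᶜ ∨ xᶜ ≤ y ∨ xᶜ ≤ yᶜ
  finite_Icc : ∀ x y : P, (Set.Icc x y).Finite

class IsTreeSetAction (H P : Type*) [Group H] [MulAction H P] [PartialOrder P] [Compl P] :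
    Prop where
  smul_le_smul : ∀ (g : H) {x y : P}, x ≤ y → g • x ≤ g • y
  smul_compl : ∀ (g : H) (x : P), g • xᶜ = (g • x)ᶜ

attribute [simp] IsTreeSet.compl_compl

namespace IsTreeSet

variable {P : Type*} [PartialOrder P] [Compl P] {x y z c : P}

section

variable [IsTreeSet P]

lemma compl_injective : Function.Injective (fun x : P => xᶜ) :=
  fun x y h => by simpa using congrArg (·ᶜ) h

@[simp] lemma compl_inj_iff : xᶜ = yᶜ ↔ x = y := compl_injective.eq_iff

@[simp] lemma compl_le_compl_iff : xᶜ ≤ yᶜ ↔ y ≤ x :=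
  ⟨fun h => by simpa using compl_le_compl h, compl_le_compl⟩

lemma compl_le_comm : xᶜ ≤ y ↔ yᶜ ≤ x := by
  rw [← compl_le_compl_iff, compl_compl]

lemma le_compl_comm : x ≤ yᶜ ↔ y ≤ xᶜ := by
  rw [← compl_le_compl_iff, compl_compl]

@[simp] lemma compl_lt_compl_iff : xᶜ < yᶜ ↔ y < x := by
  simp [lt_iff_le_not_ge]

lemma compl_lt_comm : xᶜ < y ↔ yᶜ < x := by
  rw [← compl_lt_compl_iff, compl_compl]

lemma lt_compl_comm : x < yᶜ ↔ y < xᶜ := by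
  rw [← compl_lt_compl_iff, compl_compl]

lemma not_compl_le (x : P) : ¬ xᶜ ≤ x := by
  simpa using not_le_compl xᶜ

lemma not_le_of_compl_le (h : xᶜ ≤ y) : ¬ x ≤ y :=
  fun h' => not_compl_le y ((compl_le_compl h').trans h)

@[simp] lemma compl_covBy_compl_iff : xᶜ ⋖ yᶜ ↔ y ⋖ x := by
  refine ⟨fun h => ⟨compl_lt_compl_iff.mp h.lt, fun w hyw hwx => ?_⟩,
    fun h => ⟨compl_lt_compl_iff.mpr h.lt, fun w hxw hwy => ?_⟩⟩
  · exact h.2 (compl_lt_compl_iff.mpr hwx) (compl_lt_compl_iff.mpr hyw)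
  · exact h.2 (lt_compl_comm.mp hwy) (compl_lt_comm.mp hxw)

lemma compl_covBy_trans (hxy : xᶜ ⋖ y) (hyz : yᶜ ⋖ z) (hxz : x ≠ z) : xᶜ ⋖ z := by
  have hyx : yᶜ ≤ x := compl_le_comm.mp hxy.le
  rcases nested x z with h | h | h | h
  · rcases hyz.eq_or_eq hyx h with rfl | rfl
    · exact absurd (by simp) hxy.ne
    · exact absurd rfl hxz
  · exact absurd ((hyz.le.trans (le_compl_comm.mp h)).trans hxy.le) (not_compl_le y)
  · refine ⟨h.lt_of_ne fun hzx => ?_, fun w hxw hwz => ?_⟩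
    · subst hzx
      exact not_le_of_compl_le hxy.le (compl_le_compl_iff.mp hyz.le)
    rcases nested w y with h' | h' | h' | h'
    · obtain rfl : w = y := h'.eq_of_not_lt (hxy.2 hxw)
      exact not_le_of_compl_le hyz.le hwz.le
    · exact not_compl_le x (hxy.le.trans (compl_le_compl_iff.mp (hxw.le.trans h')))
    · obtain rfl : w = yᶜ := ((compl_le_comm.mp h').eq_of_not_lt (hyz.2 · hwz)).symm
      exact not_compl_le x (hxy.lt.trans (compl_lt_compl_iff.mp hxw)).le
    · exact not_le_of_compl_le hyz.le ((compl_le_compl_iff.mp h').trans hwz.le)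
  · rcases hxy.eq_or_eq h (compl_le_comm.mp hyz.le) with h' | h'
    · exact absurd (compl_inj_iff.mp h').symm hxz
    · exact absurd (by rw [← h', compl_compl]) hyz.ne

end

/-- The oriented edges `x` and `y` start at the same vertex of the tree. -/
def SameVertex (x y : P) : Prop := x = y ∨ xᶜ ⋖ y

open IsTreeSetAction in
lemma SameVertex.smul {H : Type*} [Group H] [MulAction H P] [IsTreeSetAction H P] (g : H)
    (h : SameVertex x y) : SameVertex (g • x) (g • y) := by
  let e : P ≃o P :=
    { MulAction.toPerm g with
      map_rel_iff' := ⟨fun h => by simpa using smul_le_smul g⁻¹ h, smul_le_smul g⟩ }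
  rcases h with rfl | h
  · exact .inl rfl
  · exact .inr (smul_compl g x ▸ (apply_covBy_apply_iff e).mpr h)

variable [IsTreeSet P]

lemma SameVertex.symm : SameVertex x y → SameVertex y x
  | .inl h => .inl h.symm
  | .inr h => .inr (by simpa using compl_covBy_compl_iff.mpr h)

lemma SameVertex.trans : SameVertex x y → SameVertex y z → SameVertex x z
  | .inl rfl, h => h
  | h, .inl rfl => h
  | .inr hxy, .inr hyz => by
    by_cases hxz : x = z
    · exact .inl hxz
    · exact .inr (compl_covBy_trans hxy hyz hxz)

variable (P) in
def vertexSetoid : Setoid P :=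
  ⟨SameVertex, ⟨fun _ => .inl rfl, SameVertex.symm, SameVertex.trans⟩⟩

variable (P) in
def Vertex : Type _ := Quotient (vertexSetoid P)

def vertex (x : P) : Vertex P := Quotient.mk _ x

lemma vertex_eq_vertex_iff : vertex x = vertex y ↔ SameVertex x y :=
  Quotient.eq (r := vertexSetoid P)

lemma vertex_ne_vertex_compl (x : P) : vertex x ≠ vertex xᶜ := by
  rw [Ne, vertex_eq_vertex_iff]
  rintro (h | h)
  · exact not_le_compl x h.le
  · exact lt_irrefl _ h.lt

lemma eq_of_vertex_eq_of_vertex_compl_eq (h : vertex x = vertex y)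
    (hc : vertex xᶜ = vertex yᶜ) : x = y := by
  rw [vertex_eq_vertex_iff] at h hc
  rcases h with h | h
  · exact h
  rcases hc with hc | hc
  · exact compl_inj_iff.mp hc
  · exact absurd (lt_compl_comm.mp (by simpa using hc.lt)) (lt_asymm h.lt)

variable (P) in
def treeGraph : SimpleGraph (Vertex P) where
  Adj v w := ∃ x : P, vertex x = v ∧ vertex xᶜ = w
  symm := ⟨fun _ _ ⟨x, hv, hw⟩ => ⟨xᶜ, hw, by rwa [compl_compl]⟩⟩
  loopless := ⟨fun _ ⟨x, hv, hw⟩ => vertex_ne_vertex_compl x (hv.trans hw.symm)⟩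

lemma treeGraph_adj_vertex (x : P) : (treeGraph P).Adj (vertex x) (vertex xᶜ) := ⟨x, rfl, rfl⟩

variable (P) in
noncomputable def dartEquiv : P ≃ (treeGraph P).Dart :=
  Equiv.ofBijective (fun x => ⟨(vertex x, vertex xᶜ), treeGraph_adj_vertex x⟩)
    ⟨fun _ _ h => eq_of_vertex_eq_of_vertex_compl_eq (congrArg (·.fst) h) (congrArg (·.snd) h),
     fun d => let ⟨x, hx, hxc⟩ := d.adj; ⟨x, SimpleGraph.Dart.ext _ _ (Prod.ext hx hxc)⟩⟩

lemma dartEquiv_fst (x : P) : (dartEquiv P x).fst = vertex x := rfl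

lemma dartEquiv_snd (x : P) : (dartEquiv P x).snd = vertex xᶜ := rfl

lemma dartEquiv_compl (x : P) : dartEquiv P xᶜ = (dartEquiv P x).symm :=
  SimpleGraph.Dart.ext _ _ (Prod.ext rfl (by simp [dartEquiv_fst, dartEquiv_snd]))

lemma treeGraph_adj_vertex_of_covBy (h : x ⋖ y) : (treeGraph P).Adj (vertex x) (vertex y) := by
  have : vertex xᶜ = vertex y := vertex_eq_vertex_iff.mpr (.inr (by simpa using h))
  exact this ▸ treeGraph_adj_vertex x

lemma treeGraph_reachable_vertex_of_le (h : x ≤ y) :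
    (treeGraph P).Reachable (vertex x) (vertex y) := by
  let := LocallyFiniteOrder.ofFiniteIcc (finite_Icc (P := P))
  rw [SimpleGraph.reachable_iff_reflTransGen]
  exact (le_iff_reflTransGen_covBy.mp h).lift vertex fun _ _ => treeGraph_adj_vertex_of_covBy

lemma treeGraph_reachable_vertex (x y : P) : (treeGraph P).Reachable (vertex x) (vertex y) := by
  have hx := (treeGraph_adj_vertex x).reachable
  have hy := (treeGraph_adj_vertex y).reachable.symm
  rcases nested x y with h | h | h | h
  · exact treeGraph_reachable_vertex_of_le h
  · exact (treeGraph_reachable_vertex_of_le h).trans hy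
  · exact hx.trans (treeGraph_reachable_vertex_of_le h)
  · exact hx.trans ((treeGraph_reachable_vertex_of_le h).trans hy)

lemma treeGraph_connected [Nonempty P] : (treeGraph P).Connected := by
  have : Nonempty (Vertex P) := ⟨vertex (Classical.arbitrary P)⟩
  refine ⟨fun v w => ?_⟩
  induction v using Quotient.inductionOn with | _ x =>
  induction w using Quotient.inductionOn with | _ y =>
  exact treeGraph_reachable_vertex x y

/-- The vertex at which `x` starts lies on the side of the edge `c` where `c` starts. -/
def OnSide (c x : P) : Prop := x ≤ c ∨ cᶜ < x

lemma OnSide.of_sameVertex (h : OnSide c x) (hxy : SameVertex x y) : OnSide c y := by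
  rcases hxy with rfl | hxy
  · exact h
  rcases h with h | h
  · exact .inr ((compl_le_compl h).trans_lt hxy.lt)
  rcases nested y c with h' | h' | h' | h'
  · exact .inl h'
  · exact absurd (hxy.lt.trans (h'.trans_lt h)).le (not_compl_le x)
  · rcases (compl_le_comm.mp h').lt_or_eq with h' | rfl
    · exact .inr h'
    · exact absurd h.le (not_le_of_compl_le (by simpa using hxy.le))
  · obtain rfl : c = y := (compl_le_compl_iff.mp h').eq_of_not_lt (hxy.2 (compl_lt_comm.mp h))
    exact .inl le_rfl

lemma OnSide.compl (h : OnSide c x) (hxc : x ≠ c) : OnSide c xᶜ := by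
  rcases h with h | h
  · exact .inr ((compl_le_compl h).lt_of_ne (compl_injective.ne hxc.symm))
  · exact .inl (compl_lt_comm.mp h).le

lemma onSide_compl_iff (hc : x ≠ c) (hc' : x ≠ cᶜ) : OnSide c xᶜ ↔ OnSide c x :=
  ⟨fun h => by simpa using h.compl (fun h' => hc' (by rw [← h', compl_compl])), (·.compl hc)⟩

lemma not_onSide_compl (c : P) : ¬ OnSide c cᶜ := by
  rintro (h | h)
  · exact not_compl_le c h
  · exact lt_irrefl _ h

lemma treeGraph_isBridge (c : P) : (treeGraph P).IsBridge s(vertex c, vertex cᶜ) := by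
  let side : Vertex P → Prop := Quotient.lift (OnSide c) fun _ _ h =>
    propext ⟨(·.of_sameVertex h), (·.of_sameVertex h.symm)⟩
  have side_iff : ∀ ⦃v w⦄, ((treeGraph P).deleteEdges {s(vertex c, vertex cᶜ)}).Adj v w →
      (side v ↔ side w) := by
    intro _ _ h
    obtain ⟨⟨x, rfl, rfl⟩, hx⟩ := SimpleGraph.deleteEdges_adj.mp h
    refine (onSide_compl_iff ?_ ?_).symm
    · rintro rfl
      exact hx rfl
    · rintro rfl
      exact hx (by simp [Sym2.eq_swap])
  exact fun hreach => not_onSide_compl c ((hreach.iff_of_forall_adj side_iff).mp (.inl le_rfl))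

lemma treeGraph_isAcyclic : (treeGraph P).IsAcyclic :=
  SimpleGraph.isAcyclic_iff_forall_adj_isBridge.mpr fun _ _ ⟨c, hv, hw⟩ =>
    hv ▸ hw ▸ treeGraph_isBridge c

lemma treeGraph_isTree [Nonempty P] : (treeGraph P).IsTree :=
  ⟨treeGraph_connected, treeGraph_isAcyclic⟩

section Action

variable {H : Type*} [Group H] [MulAction H P] [IsTreeSetAction H P]

instance : MulAction H (Vertex P) where
  smul g := Quotient.map (g • ·) fun _ _ => SameVertex.smul g
  one_smul := Quotient.ind fun x => congrArg vertex (one_smul H x)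
  mul_smul g g' := Quotient.ind fun x => congrArg vertex (mul_smul g g' x)

lemma smul_vertex (g : H) (x : P) : g • vertex x = vertex (g • x) := rfl

lemma treeGraph_adj_smul (g : H) {v w : Vertex P} (h : (treeGraph P).Adj v w) :
    (treeGraph P).Adj (g • v) (g • w) := by
  obtain ⟨x, rfl, rfl⟩ := h
  exact ⟨g • x, rfl, by rw [smul_vertex, IsTreeSetAction.smul_compl]⟩

end Action

end IsTreeSet


instance {P : Type*} [PartialOrder P] [Compl P] [IsTreeSet P] : IsTreeSet (ULift P) where
  compl_compl x := congrArg ULift.up (IsTreeSet.compl_compl x.down)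
  compl_le_compl := IsTreeSet.compl_le_compl (P := P)
  not_le_compl x := IsTreeSet.not_le_compl x.down
  nested x y := IsTreeSet.nested x.down y.down
  finite_Icc x y := (IsTreeSet.finite_Icc x.down y.down).preimage ULift.down_injective.injOn

instance {H P : Type*} [Group H] [MulAction H P] [PartialOrder P] [Compl P]
    [IsTreeSetAction H P] : IsTreeSetAction H (ULift P) where
  smul_le_smul g _ _ h := IsTreeSetAction.smul_le_smul (P := P) g h
  smul_compl g x := congrArg ULift.up (IsTreeSetAction.smul_compl g x.down)

section SetFamily

variable {V : Type*} {E : Set (Set V)} [Compl E]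

lemma isTreeSet_of_nested (hcompl : ∀ C : E, ((Cᶜ : E) : Set V) = (C : Set V)ᶜ)
    (hne : ∀ C ∈ E, C.Nonempty)
    (hnested : ∀ C ∈ E, ∀ D ∈ E, C ⊆ D ∨ C ⊆ Dᶜ ∨ Cᶜ ⊆ D ∨ Cᶜ ⊆ Dᶜ)
    (hfic : ∀ C ∈ E, ∀ D ∈ E, C ⊆ D →
      {E' | E' ∈ E ∧ C ⊆ E' ∧ E' ⊆ D}.Finite) :
    IsTreeSet E where
  compl_compl C := Subtype.ext (by rw [hcompl, hcompl, compl_compl])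
  compl_le_compl {C D} h := by
    rw [← Subtype.coe_le_coe, hcompl, hcompl]
    exact Set.compl_subset_compl.mpr h
  not_le_compl C h := by
    obtain ⟨x, hx⟩ := hne C C.2
    exact (hcompl C ▸ h hx) hx
  nested C D := by simpa only [← Subtype.coe_le_coe, hcompl] using hnested C C.2 D D.2
  finite_Icc C D := by
    by_cases h : C ≤ D
    · exact ((hfic C C.2 D D.2 h).preimage Subtype.val_injective.injOn).subset
        fun X hX => ⟨X.2, hX⟩
    · simp [Set.Icc_eq_empty h]

lemma isTreeSetAction_of_coe_smul {H : Type*} [Group H] [MulAction H V] [MulAction H E]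
    (hcompl : ∀ C : E, ((Cᶜ : E) : Set V) = (C : Set V)ᶜ)
    (hsmul : ∀ (g : H) (C : E), ((g • C : E) : Set V) = g • (C : Set V)) :
    IsTreeSetAction H E where
  smul_le_smul g C D h := by
    rw [← Subtype.coe_le_coe, hsmul, hsmul]
    exact Set.smul_set_mono h
  smul_compl g C := Subtype.ext (by rw [hsmul, hcompl, hcompl, hsmul, Set.smul_set_compl])

end SetFamily

theorem stmt_18_general {H : Type u} {V : Type v} [Group H] [MulAction H V]
    (E : Set (Set V))
    (hprop : ∀ C ∈ E, C.Nonempty ∧ Cᶜ.Nonempty)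
    (hnested : ∀ C ∈ E, ∀ D ∈ E, C ⊆ D ∨ C ⊆ Dᶜ ∨ Cᶜ ⊆ D ∨ Cᶜ ⊆ Dᶜ)
    (hcompl : ∀ C ∈ E, Cᶜ ∈ E)
    (hfic : ∀ C ∈ E, ∀ D ∈ E, C ⊆ D → {E' | E' ∈ E ∧ C ⊆ E' ∧ E' ⊆ D}.Finite)
    (hHE : ∀ (h : H), ∀ C ∈ E, h • C ∈ E) :
    ∃ (W : Type (max u v)) (T : SimpleGraph W), T.IsTree ∧
      ∃ sm : H → W → W,
        (∀ w, sm 1 w = w) ∧ (∀ h h' w, sm (h * h') w = sm h (sm h' w)) ∧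
        (∀ (h : H) (w w' : W), T.Adj w w' → T.Adj (sm h w) (sm h w')) ∧
        ∃ φ : {C : Set V // C ∈ E} ≃ T.Dart,
          (∀ C D : {C : Set V // C ∈ E}, (D : Set V) = (C : Set V)ᶜ →
            φ D = (φ C).symm) ∧
          (∀ (h : H) (C D : {C : Set V // C ∈ E}), (D : Set V) = h • (C : Set V) →
            (φ D).fst = sm h ((φ C).fst) ∧ (φ D).snd = sm h ((φ C).snd)) := by
  rcases E.eq_empty_or_nonempty with rfl | ⟨C₀, hC₀⟩
  · have : IsEmpty (⊥ : SimpleGraph PUnit).Dart := ⟨fun d => d.adj⟩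
    exact ⟨PUnit, ⊥, ⟨.of_subsingleton, SimpleGraph.isAcyclic_bot⟩, fun _ w => w,
      fun _ => rfl, fun _ _ _ => rfl, fun _ _ _ h => h, Equiv.equivOfIsEmpty _ _,
      fun C => C.2.elim, fun _ C => C.2.elim⟩
  let : Compl {C : Set V // C ∈ E} := ⟨fun C => ⟨(C : Set V)ᶜ, hcompl C C.2⟩⟩
  let : MulAction H {C : Set V // C ∈ E} :=
    { smul g C := ⟨g • (C : Set V), hHE g C C.2⟩
      one_smul C := Subtype.ext (one_smul H (C : Set V))
      mul_smul g g' C := Subtype.ext (mul_smul g g' (C : Set V)) }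
  have := isTreeSet_of_nested (fun _ => rfl) (fun C hC => (hprop C hC).1) hnested hfic
  have := isTreeSetAction_of_coe_smul (H := H) (E := E) (fun _ => rfl) (fun _ _ => rfl)
  have : Nonempty (ULift.{u} {C : Set V // C ∈ E}) := ⟨⟨⟨C₀, hC₀⟩⟩⟩
  refine ⟨IsTreeSet.Vertex (ULift.{u} {C : Set V // C ∈ E}), IsTreeSet.treeGraph _,
    IsTreeSet.treeGraph_isTree, (· • ·), one_smul H, mul_smul,
    fun g _ _ => IsTreeSet.treeGraph_adj_smul g, Equiv.ulift.symm.trans (IsTreeSet.dartEquiv _),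
    ?_, ?_⟩
  · intro C D hD
    obtain rfl : D = Cᶜ := Subtype.ext hD
    exact IsTreeSet.dartEquiv_compl (ULift.up C)
  · intro g C D hD
    obtain rfl : D = g • C := Subtype.ext hD
    refine ⟨rfl, ?_⟩
    show IsTreeSet.vertex (ULift.up (g • C))ᶜ = g • IsTreeSet.vertex (ULift.up C)ᶜ
    rw [IsTreeSet.smul_vertex, IsTreeSetAction.smul_compl]
    rfl

/-- Dunwoody's tree construction: a nested set `E` of subsets of `V`, closed under
complementation, satisfying the finite interval condition, and preserved by an action
of a group `H` on `V` (with the quotient nested set also satisfying the finite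
interval condition and the preimage construction preserving nesting), is the directed
edge set of a tree on which `H` acts: there is a tree `T` and an `H`-action on it,
together with an `H`-equivariant bijection from `E` to the darts of `T` carrying
complementation to dart reversal. -/
theorem stmt_18 {H : Type u} {V : Type v} [Group H] [MulAction H V]
    (E : Set (Set V))
    (hprop : ∀ C ∈ E, C.Nonempty ∧ Cᶜ.Nonempty)
    (hnested : ∀ C ∈ E, ∀ D ∈ E, C ⊆ D ∨ C ⊆ Dᶜ ∨ Cᶜ ⊆ D ∨ Cᶜ ⊆ Dᶜ)
    (hcompl : ∀ C ∈ E, Cᶜ ∈ E)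
    (hfic : ∀ C ∈ E, ∀ D ∈ E, C ⊆ D → {E' | E' ∈ E ∧ C ⊆ E' ∧ E' ⊆ D}.Finite)
    (hHE : ∀ (h : H), ∀ C ∈ E, h • C ∈ E)
    (hqfic : ∀ C ∈ E, ∀ D ∈ E, C ⊆ D →
      {O : Set (Set V) | ∃ E' ∈ E, C ⊆ E' ∧ E' ⊆ D ∧ O = MulAction.orbit H E'}.Finite)
    (hpre : ∀ (h : H), ∀ C ∈ E, ∀ D ∈ E,
      h • C ⊆ D ∨ h • C ⊆ Dᶜ ∨ (h • C)ᶜ ⊆ D ∨ (h • C)ᶜ ⊆ Dᶜ) :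
    ∃ (W : Type (max u v)) (T : SimpleGraph W), T.IsTree ∧
      ∃ sm : H → W → W,
        (∀ w, sm 1 w = w) ∧ (∀ h h' w, sm (h * h') w = sm h (sm h' w)) ∧
        (∀ (h : H) (w w' : W), T.Adj w w' → T.Adj (sm h w) (sm h w')) ∧
        ∃ φ : {C : Set V // C ∈ E} ≃ T.Dart,
          (∀ C D : {C : Set V // C ∈ E}, (D : Set V) = (C : Set V)ᶜ →
            φ D = (φ C).symm) ∧
          (∀ (h : H) (C D : {C : Set V // C ∈ E}), (D : Set V) = h • (C : Set V) →
            (φ D).fst = sm h ((φ C).fst) ∧ (φ D).snd = sm h ((φ C).snd)) :=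
  stmt_18_general E hprop hnested hcompl hfic hHE
end
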